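/- arXiv:2402.13824 — 11 statements merged into one kernel-verified Lean document; each statement's English description precedes it below -/
import Mathlib

section
/- There exists a principal-multi-agent instance in which every incentive-compatible deterministic contract yields principal utility at most 0, while some incentive-compatible randomized contract yields principal utility at least 1/15; consequently the ratio Opt_R/Opt_D between the optimal randomized and optimal deterministic principal utilities is unbounded. -/
open scoped Classical BigOperators

/-- A principal-multi-agent instance. -/
structure PMA where
  n : ℕ
  npos : 0 < n
  Out : Type
  [fOut : Fintype Out]
  r : Out → ℝ
  r_nonneg : ∀ ω, 0 ≤ r ω
  r_le_one : ∀ ω, r ω ≤ 1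
  A : Fin n → Type
  [fA : ∀ i, Fintype (A i)]
  [neA : ∀ i, Nonempty (A i)]
  c : ∀ i : Fin n, A i → ℝ
  c_nonneg : ∀ i a, 0 ≤ c i a
  c_le_one : ∀ i a, c i a ≤ 1
  c_zero : ∀ i, ∃ a, c i a = 0
  F : (∀ i, A i) → Out → ℝ
  F_nonneg : ∀ a ω, 0 ≤ F a ω
  F_sum_one : ∀ a, ∑ ω, F a ω = 1

attribute [instance] PMA.fOut PMA.fA PMA.neA

namespace PMA

variable (I : PMA)

/-- Joint action profiles. -/
abbrev Profile := ∀ i, I.A i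

/-- Total cost of a joint action profile. -/
noncomputable def cost (a : I.Profile) : ℝ := ∑ i, I.c i (a i)

/-- A deterministic contract `(a, p)` is incentive compatible (with nonnegative payments). -/
def DetIC (a : I.Profile) (p : Fin I.n → I.Out → ℝ) : Prop :=
  (∀ i ω, 0 ≤ p i ω) ∧
  ∀ (i : Fin I.n) (ai' : I.A i),
    (∑ ω, I.F a ω * p i ω) - I.c i (a i) ≥
      (∑ ω, I.F (Function.update a i ai') ω * p i ω) - I.c i ai'

/-- Principal utility of a deterministic contract. -/
noncomputable def detUtil (a : I.Profile) (p : Fin I.n → I.Out → ℝ) : ℝ :=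
  ∑ ω, I.F a ω * (I.r ω - ∑ i, p i ω)

/-- Optimal principal utility over IC deterministic contracts. -/
noncomputable def OptD : ℝ := sSup {u | ∃ a p, I.DetIC a p ∧ u = I.detUtil a p}

/-- `μ` is a probability distribution over action profiles. -/
def IsDistrib (μ : I.Profile → ℝ) : Prop := (∀ a, 0 ≤ μ a) ∧ ∑ a, μ a = 1

/-- `(μ, π)` is an incentive-compatible randomized contract. -/
def RandIC (μ : I.Profile → ℝ) (π : Fin I.n → I.Profile → I.Out → ℝ) : Prop :=
  I.IsDistrib μ ∧ (∀ i a ω, 0 ≤ π i a ω) ∧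
  ∀ (i : Fin I.n) (ai ai' : I.A i),
    (∑ a : I.Profile, if a i = ai then
        μ a * ((∑ ω, π i a ω * I.F a ω) - I.c i ai) else 0) ≥
      (∑ a : I.Profile, if a i = ai then
        μ a * ((∑ ω, π i a ω * I.F (Function.update a i ai') ω) - I.c i ai') else 0)

/-- Principal utility of a randomized contract. -/
noncomputable def randUtil (μ : I.Profile → ℝ) (π : Fin I.n → I.Profile → I.Out → ℝ) : ℝ :=
  ∑ a : I.Profile, ∑ ω, μ a * I.F a ω * (I.r ω - ∑ i, π i a ω)

/-- Supremum of the principal's utility over IC randomized contracts. -/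
noncomputable def OptR : ℝ := sSup {u | ∃ μ π, I.RandIC μ π ∧ u = I.randUtil μ π}

/-- The inducible action profiles. -/
def AindR : Set I.Profile := {a | ∃ μ π, I.RandIC μ π ∧ 0 < μ a}

/-- The LP incentive constraints. -/
def LPICc (μ : I.Profile → ℝ) (x : Fin I.n → I.Profile → I.Out → ℝ) : Prop :=
  ∀ (i : Fin I.n) (ai ai' : I.A i),
    (∑ a : I.Profile, if a i = ai then
        (∑ ω, x i a ω * I.F a ω) - μ a * I.c i ai else 0) ≥
      (∑ a : I.Profile, if a i = ai then
        (∑ ω, x i a ω * I.F (Function.update a i ai') ω) - μ a * I.c i ai' else 0)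

/-- Feasibility for `LP(∞, A')`. -/
def LPFeasInf (A' : Set I.Profile) (μ : I.Profile → ℝ)
    (x : Fin I.n → I.Profile → I.Out → ℝ) : Prop :=
  I.IsDistrib μ ∧ (∀ i a ω, 0 ≤ x i a ω) ∧ I.LPICc μ x ∧
    ∀ a ∉ A', μ a = 0 ∧ ∀ i ω, x i a ω = 0

/-- Feasibility for `LP(M, A')` with finite `M`. -/
def LPFeas (M : ℝ) (A' : Set I.Profile) (μ : I.Profile → ℝ)
    (x : Fin I.n → I.Profile → I.Out → ℝ) : Prop :=
  I.LPFeasInf A' μ x ∧ ∀ i a ω, x i a ω ≤ M * μ a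

/-- The LP objective. -/
noncomputable def LPobj (μ : I.Profile → ℝ) (x : Fin I.n → I.Profile → I.Out → ℝ) : ℝ :=
  ∑ a : I.Profile, ∑ ω, I.F a ω * (μ a * I.r ω - ∑ i, x i a ω)

/-- The α-virtual social welfare. -/
noncomputable def Vsw (α : ℝ) : ℝ :=
  ⨆ a : I.Profile, ((∑ ω, I.F a ω * I.r ω) - α * I.cost a)

/-- Best responses to payment scheme `p` under α-virtual costs (single combinatorial agent). -/
def BestResp (α : ℝ) (p : I.Out → ℝ) : Set I.Profile :=
  {a | ∀ a' : I.Profile,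
    (∑ ω, I.F a' ω * p ω) - α * I.cost a' ≤ (∑ ω, I.F a ω * p ω) - α * I.cost a}

/-- Optimal principal utility in the single-agent problem with α-virtual costs. -/
noncomputable def OptS (α : ℝ) : ℝ :=
  sSup {u | ∃ (p : I.Out → ℝ) (a : I.Profile), (∀ ω, 0 ≤ p ω) ∧ a ∈ I.BestResp α p ∧
    u = ∑ ω, I.F a ω * (I.r ω - p ω)}

end PMA

noncomputable section GapExample

def ggap (a : Fin 2 → Bool) : ℝ :=
  if a 0 then (if a 1 then 1 else 1/3) else (if a 1 then 1/3 else 0)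

lemma ggap_nonneg (a : Fin 2 → Bool) : 0 ≤ ggap a := by
  unfold ggap; split_ifs <;> norm_num

lemma ggap_le_one (a : Fin 2 → Bool) : ggap a ≤ 1 := by
  unfold ggap; split_ifs <;> norm_num

def myPMA : PMA where
  n := 2
  npos := by norm_num
  Out := Bool
  fOut := inferInstance
  r := fun ω => if ω then 1 else 0
  r_nonneg := by intro ω; split <;> norm_num
  r_le_one := by intro ω; split <;> norm_num
  A := fun _ => Bool
  fA := fun _ => inferInstance
  neA := fun _ => inferInstance
  c := fun _ b => if b then 1/3 else 0
  c_nonneg := by intro i a; split <;> norm_num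
  c_le_one := by intro i a; split <;> norm_num
  c_zero := by intro i; exact ⟨false, by norm_num⟩
  F := fun a ω => if ω then ggap a else 1 - ggap a
  F_nonneg := by
    intro a ω; split
    · exact ggap_nonneg a
    · linarith [ggap_le_one a]
  F_sum_one := by
    intro a; rw [Fintype.sum_bool]; norm_num

lemma sum_profileB (f : (Fin 2 → Bool) → ℝ) :
    ∑ a : Fin 2 → Bool, f a
      = f ![false,false] + f ![false,true] + f ![true,false] + f ![true,true] := by
  rw [← Equiv.sum_comp (piFinTwoEquiv fun _ => Bool).symm f, Fintype.sum_prod_type,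
    Fintype.sum_bool, Fintype.sum_bool, Fintype.sum_bool]
  have e : ∀ x y : Bool, (piFinTwoEquiv fun _ => Bool).symm (x, y) = ![x, y] := by
    intro x y; funext i; fin_cases i <;> rfl
  simp only [e]
  ring

lemma sum_profile (f : myPMA.Profile → ℝ) :
    ∑ a : myPMA.Profile, f a
      = f ![false,false] + f ![false,true] + f ![true,false] + f ![true,true] :=
  sum_profileB f

lemma upd_apply' (a : Fin 2 → Bool) (i j : Fin 2) (b : Bool) :
    @Function.update (Fin 2) (fun _ => Bool) (instDecidableEqFin myPMA.n) a i b j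
      = if j = i then b else a j :=
  Function.update_apply a i b j

lemma upd_apply'' (a : myPMA.Profile) (i j : Fin 2) (b : Bool) :
    @Function.update (Fin 2) (fun _ => Bool) (instDecidableEqFin myPMA.n) a i b j
      = if j = i then b else a j :=
  Function.update_apply a i b j

lemma det_le (a : myPMA.Profile) (p : Fin myPMA.n → myPMA.Out → ℝ)
    (h : myPMA.DetIC a p) : myPMA.detUtil a p ≤ 0 := by
  obtain ⟨hp, hic⟩ := h
  have hic' : ∀ (i : Fin 2) (b : Bool),
      (∑ ω : Bool, myPMA.F a ω * p i ω) - myPMA.c i (a i) ≥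
        (∑ ω : Bool, myPMA.F (Function.update a i b) ω * p i ω) - myPMA.c i b := hic
  have hp' : ∀ (i : Fin 2) (ω : Bool), 0 ≤ p i ω := hp
  have h0 := hic' 0 false
  have h1 := hic' 1 false
  have hp0t := hp' 0 true; have hp0f := hp' 0 false
  have hp1t := hp' 1 true; have hp1f := hp' 1 false
  show (∑ ω : Bool, myPMA.F a ω * (myPMA.r ω - ∑ i : Fin 2, p i ω)) ≤ 0
  cases hx : a (0 : Fin 2) <;> cases hy : a (1 : Fin 2) <;>
    simp only [myPMA, ggap, hx, hy, Fintype.sum_bool, Fin.sum_univ_two,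
      Function.update_apply, upd_apply'', if_true, if_false, Bool.false_eq_true, Bool.true_eq_false,
      show ((1:Fin 2) = 0) ↔ False from by decide, show ((0:Fin 2) = 1) ↔ False from by decide,
      reduceIte, Fin.isValue] at h0 h1 ⊢ <;>
    linarith

def muR (a : Fin 2 → Bool) : ℝ :=
  if a 0 then (if a 1 then 1/2 else 1/4) else (if a 1 then 1/4 else 0)

def piR (i : Fin 2) (a : Fin 2 → Bool) (ω : Bool) : ℝ :=
  if i = 0 then (if a 0 = true ∧ a 1 = false ∧ ω = true then 3 else 0)
  else (if a 1 = true ∧ a 0 = false ∧ ω = true then 3 else 0)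

lemma muR_sum : (∑ a : myPMA.Profile, muR a) = 1 := by
  rw [sum_profile (fun a => muR a)]
  norm_num [muR]

lemma randIC_aux0 (ai ai' : Bool) :
    (∑ a : myPMA.Profile, if a (0 : Fin 2) = ai then
        muR a * ((∑ ω : Bool, piR (0 : Fin 2) a ω * myPMA.F a ω) - myPMA.c (0 : Fin 2) ai) else 0) ≥
      (∑ a : myPMA.Profile, if a (0 : Fin 2) = ai then
        muR a * ((∑ ω : Bool, piR (0 : Fin 2) a ω * myPMA.F (Function.update a (0 : Fin 2) ai') ω) - myPMA.c (0 : Fin 2) ai') else 0) := by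
  cases ai <;> cases ai' <;>
    rw [sum_profile, sum_profile] <;>
    simp only [muR, piR, myPMA, ggap, Fintype.sum_bool, Function.update_apply, upd_apply',
      Bool.true_eq_false, Bool.false_eq_true, Matrix.cons_val_zero, Matrix.cons_val_one,
      Matrix.head_cons, eq_self_iff_true, true_and, and_true, false_and, and_false,
      if_true, if_false, reduceIte, Fin.isValue,
      show ((1:Fin 2) = 0) ↔ False from by decide, show ((0:Fin 2) = 1) ↔ False from by decide] <;>
    norm_num

lemma randIC_aux1 (ai ai' : Bool) :
    (∑ a : myPMA.Profile, if a (1 : Fin 2) = ai then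
        muR a * ((∑ ω : Bool, piR (1 : Fin 2) a ω * myPMA.F a ω) - myPMA.c (1 : Fin 2) ai) else 0) ≥
      (∑ a : myPMA.Profile, if a (1 : Fin 2) = ai then
        muR a * ((∑ ω : Bool, piR (1 : Fin 2) a ω * myPMA.F (Function.update a (1 : Fin 2) ai') ω) - myPMA.c (1 : Fin 2) ai') else 0) := by
  cases ai <;> cases ai' <;>
    rw [sum_profile, sum_profile] <;>
    simp only [muR, piR, myPMA, ggap, Fintype.sum_bool, Function.update_apply, upd_apply',
      Bool.true_eq_false, Bool.false_eq_true, Matrix.cons_val_zero, Matrix.cons_val_one,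
      Matrix.head_cons, eq_self_iff_true, true_and, and_true, false_and, and_false,
      if_true, if_false, reduceIte, Fin.isValue,
      show ((1:Fin 2) = 0) ↔ False from by decide, show ((0:Fin 2) = 1) ↔ False from by decide] <;>
    norm_num

lemma randIC_aux (i : Fin 2) (ai ai' : Bool) :
    (∑ a : myPMA.Profile, if a i = ai then
        muR a * ((∑ ω : Bool, piR i a ω * myPMA.F a ω) - myPMA.c i ai) else 0) ≥
      (∑ a : myPMA.Profile, if a i = ai then
        muR a * ((∑ ω : Bool, piR i a ω * myPMA.F (Function.update a i ai') ω) - myPMA.c i ai') else 0) := by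
  fin_cases i
  · exact randIC_aux0 ai ai'
  · exact randIC_aux1 ai ai'

lemma randUtil_val :
    (1:ℝ)/15 ≤ ∑ a : myPMA.Profile, ∑ ω : Bool,
      muR a * myPMA.F a ω * (myPMA.r ω - ∑ i : Fin 2, piR i a ω) := by
  rw [sum_profile]
  simp only [muR, piR, myPMA, ggap, Fintype.sum_bool, Fin.sum_univ_two, Function.update_apply, upd_apply',
    Bool.true_eq_false, Bool.false_eq_true, Matrix.cons_val_zero, Matrix.cons_val_one,
    Matrix.head_cons, eq_self_iff_true, true_and, and_true, false_and, and_false,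
    if_true, if_false, reduceIte, Fin.isValue,
    show ((1:Fin 2) = 0) ↔ False from by decide, show ((0:Fin 2) = 1) ↔ False from by decide]
  norm_num

end GapExample

/-- There exists a principal-multi-agent instance in which every IC
deterministic contract yields principal utility at most `0`, while some IC randomized
contract yields principal utility at least `1/15`; hence the ratio `Opt_R / Opt_D` between
the optimal randomized and deterministic principal utilities is unbounded. -/
theorem randomized_vs_deterministic_gap :
    ∃ I : PMA,
      (∀ (a : I.Profile) (p : Fin I.n → I.Out → ℝ),
        I.DetIC a p → I.detUtil a p ≤ 0) ∧
      (∃ (μ : I.Profile → ℝ) (π : Fin I.n → I.Profile → I.Out → ℝ),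
        I.RandIC μ π ∧ (1 : ℝ) / 15 ≤ I.randUtil μ π) := by
  refine ⟨myPMA, det_le, muR, piR, ⟨⟨fun a => ?_, muR_sum⟩, fun i a ω => ?_, randIC_aux⟩, randUtil_val⟩
  · show 0 ≤ muR a
    unfold muR; split_ifs <;> norm_num
  · show 0 ≤ piR i a ω
    unfold piR; split_ifs <;> norm_num
end

section
/- Fix a principal-multi-agent instance and M ∈ (0,∞). Let (μ, x) be any feasible solution of LP(M, 𝒜). Define payments π by π^i_a(ω) := x^i_a(ω)/μ(a) when μ(a) > 0 and π^i_a(ω) := 0 otherwise. Then (μ, π) is an incentive-compatible randomized contract, x^i_a(ω) = μ(a)·π^i_a(ω) for all i, a, ω, and the principal utility of (μ, π) equals the LP objective value of (μ, x). -/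
open scoped Classical BigOperators

/-- From any feasible solution `(μ, x)` of `LP(M, 𝒜)` (finite `M > 0`),
defining `π^i_a(ω) := x^i_a(ω)/μ(a)` when `μ(a) > 0` and `0` otherwise yields an IC
randomized contract with `x^i_a(ω) = μ(a)·π^i_a(ω)` everywhere and with principal utility
equal to the LP objective of `(μ, x)`. -/
theorem lp_solution_to_randomized_contract (I : PMA) (M : ℝ) (hM : 0 < M)
    (μ : I.Profile → ℝ) (x : Fin I.n → I.Profile → I.Out → ℝ)
    (hfeas : I.LPFeas M Set.univ μ x) :
    I.RandIC μ (fun i a ω => if 0 < μ a then x i a ω / μ a else 0) ∧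
    (∀ (i : Fin I.n) (a : I.Profile) (ω : I.Out),
      x i a ω = μ a * (if 0 < μ a then x i a ω / μ a else 0)) ∧
    I.randUtil μ (fun i a ω => if 0 < μ a then x i a ω / μ a else 0) = I.LPobj μ x := by
  obtain ⟨⟨⟨hμ0, hμ1⟩, hx0, hic, _⟩, hxM⟩ := hfeas
  have hkey : ∀ (i : Fin I.n) (a : I.Profile) (ω : I.Out),
      x i a ω = μ a * (if 0 < μ a then x i a ω / μ a else 0) := by
    intro i a ω
    by_cases h : 0 < μ a
    · simp [h]
      field_simp
    · have hz : μ a = 0 := le_antisymm (not_lt.1 h) (hμ0 a)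
      have : x i a ω ≤ 0 := by
        have := hxM i a ω
        simpa [hz] using this
      have hxz : x i a ω = 0 := le_antisymm this (hx0 i a ω)
      simp [h, hxz]
  refine ⟨⟨⟨hμ0, hμ1⟩, ?_, ?_⟩, hkey, ?_⟩
  · intro i a ω
    by_cases h : 0 < μ a
    · simp only [h, if_true]
      exact div_nonneg (hx0 i a ω) (le_of_lt h)
    · simp [h]
  · intro i ai ai'
    have hterm : ∀ (a : I.Profile) (ai'' : I.A i) (b : I.Profile),
        μ a * ((∑ ω, (if 0 < μ a then x i a ω / μ a else 0) * I.F b ω) - I.c i ai'')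
          = (∑ ω, x i a ω * I.F b ω) - μ a * I.c i ai'' := by
      intro a ai'' b
      rw [mul_sub, Finset.mul_sum]
      congr 1
      refine Finset.sum_congr rfl fun ω _ => ?_
      rw [← mul_assoc, ← hkey i a ω]
    have := hic i ai ai'
    calc (∑ a : I.Profile, if a i = ai then
            μ a * ((∑ ω, (if 0 < μ a then x i a ω / μ a else 0) * I.F a ω) - I.c i ai) else 0)
        = (∑ a : I.Profile, if a i = ai then
            (∑ ω, x i a ω * I.F a ω) - μ a * I.c i ai else 0) := by
          refine Finset.sum_congr rfl fun a _ => ?_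
          by_cases h : a i = ai
          · rw [if_pos h, if_pos h, hterm a ai a]
          · rw [if_neg h, if_neg h]
      _ ≥ (∑ a : I.Profile, if a i = ai then
            (∑ ω, x i a ω * I.F (Function.update a i ai') ω) - μ a * I.c i ai' else 0) := this
      _ = (∑ a : I.Profile, if a i = ai then
            μ a * ((∑ ω, (if 0 < μ a then x i a ω / μ a else 0)
              * I.F (Function.update a i ai') ω) - I.c i ai') else 0) := by
          refine Finset.sum_congr rfl fun a _ => ?_
          by_cases h : a i = ai
          · rw [if_pos h, if_pos h, hterm a ai' (Function.update a i ai')]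
          · rw [if_neg h, if_neg h]
  · unfold PMA.randUtil PMA.LPobj
    refine Finset.sum_congr rfl fun a _ => Finset.sum_congr rfl fun ω _ => ?_
    have hs : ∑ i : Fin I.n, x i a ω
        = μ a * ∑ i : Fin I.n, (if 0 < μ a then x i a ω / μ a else 0) := by
      rw [Finset.mul_sum]
      exact Finset.sum_congr rfl fun i _ => hkey i a ω
    rw [hs]; ring
end

section
/- Fix a principal-multi-agent instance, and suppose the set 𝒜°_R of inducible action profiles is nonempty. Then for every ε > 0 and every K > 0 there exists M ∈ (0,∞) such that for every feasible solution (μ, x) of LP(∞, 𝒜°_R) satisfying x^i_a(ω) ≤ K for all i, a, ω, there exists a feasible solution (μ̄, x̄) of LP(M, 𝒜°_R) whose LP objective value is at least the LP objective value of (μ, x) minus ε. -/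
open scoped Classical BigOperators

namespace PMA

variable (I : PMA)

/-- From a randomized IC contract we get a feasible solution of `LP(∞, AindR)`. -/
lemma randIC_LPFeasInf {ν : I.Profile → ℝ} {π : Fin I.n → I.Profile → I.Out → ℝ}
    (h : I.RandIC ν π) :
    I.LPFeasInf I.AindR ν (fun i a ω => ν a * π i a ω) := by
  obtain ⟨hd, hπ, hic⟩ := h
  refine ⟨hd, fun i a ω => mul_nonneg (hd.1 a) (hπ i a ω), ?_, ?_⟩
  · intro i ai ai'
    have key : ∀ (g : I.Profile → I.Out → ℝ) (κ : ℝ),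
        (∑ a : I.Profile, if a i = ai then
            ν a * ((∑ ω, π i a ω * g a ω) - κ) else 0)
          = ∑ a : I.Profile, if a i = ai then
            (∑ ω, (ν a * π i a ω) * g a ω) - ν a * κ else 0 := by
      intro g κ
      refine Finset.sum_congr rfl fun a _ => ?_
      split_ifs
      · rw [mul_sub, Finset.mul_sum]
        congr 1
        exact Finset.sum_congr rfl fun ω _ => by ring
      · rfl
    have h3 := hic i ai ai'
    have k1 := key I.F (I.c i ai)
    have k2 := key (fun p ω => I.F (Function.update p i ai') ω) (I.c i ai')
    exact le_trans (le_of_eq k2.symm) (le_trans h3 (le_of_eq k1))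
  · intro a ha
    have hν0 : ν a = 0 := by
      by_contra hcon
      exact ha ⟨ν, π, ⟨hd, hπ, hic⟩, lt_of_le_of_ne (hd.1 a) (Ne.symm hcon)⟩
    exact ⟨hν0, fun i ω => by simp only [hν0, zero_mul]⟩

/-- Nonnegative combinations of solutions satisfy the LP IC constraints. -/
lemma LPICc_combo {β : Type*} (T : Finset β) (w : β → ℝ) (hw : ∀ b ∈ T, 0 ≤ w b)
    (m : β → I.Profile → ℝ) (X : β → Fin I.n → I.Profile → I.Out → ℝ)
    (h : ∀ b ∈ T, I.LPICc (m b) (X b)) :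
    I.LPICc (fun a => ∑ b ∈ T, w b * m b a)
      (fun i a ω => ∑ b ∈ T, w b * X b i a ω) := by
  intro i ai ai'
  have key : ∀ (g : I.Profile → I.Out → ℝ) (κ : ℝ),
      (∑ a : I.Profile, if a i = ai then
          (∑ ω, (∑ b ∈ T, w b * X b i a ω) * g a ω) - (∑ b ∈ T, w b * m b a) * κ else 0)
        = ∑ b ∈ T, w b * ∑ a : I.Profile,
            (if a i = ai then (∑ ω, X b i a ω * g a ω) - m b a * κ else 0) := by
    intro g κ
    have step : ∀ a : I.Profile,
        (if a i = ai then
            (∑ ω, (∑ b ∈ T, w b * X b i a ω) * g a ω) - (∑ b ∈ T, w b * m b a) * κ else 0)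
          = ∑ b ∈ T, w b * (if a i = ai then (∑ ω, X b i a ω * g a ω) - m b a * κ else 0) := by
      intro a
      split_ifs
      · simp only [mul_sub, Finset.mul_sum, Finset.sum_sub_distrib, Finset.sum_mul, mul_assoc]
        congr 1
        exact Finset.sum_comm
      · simp
    simp only [step]
    rw [Finset.sum_comm]
    simp only [Finset.mul_sum]
  have k1 := key I.F (I.c i ai)
  have k2 := key (fun p ω => I.F (Function.update p i ai') ω) (I.c i ai')
  have hsum : (∑ b ∈ T, w b * ∑ a : I.Profile,
        (if a i = ai then
          (∑ ω, X b i a ω * I.F (Function.update a i ai') ω) - m b a * I.c i ai' else 0))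
      ≤ ∑ b ∈ T, w b * ∑ a : I.Profile,
        (if a i = ai then (∑ ω, X b i a ω * I.F a ω) - m b a * I.c i ai else 0) :=
    Finset.sum_le_sum fun b hb => mul_le_mul_of_nonneg_left (h b hb i ai ai') (hw b hb)
  exact le_trans (le_of_eq k2) (le_trans hsum (le_of_eq k1.symm))

/-- Two-term mixture version of the LP IC constraints. -/
lemma LPICc_mix {μ₁ μ₂ : I.Profile → ℝ} {x₁ x₂ : Fin I.n → I.Profile → I.Out → ℝ}
    (s t : ℝ) (hs : 0 ≤ s) (ht : 0 ≤ t)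
    (h1 : I.LPICc μ₁ x₁) (h2 : I.LPICc μ₂ x₂) :
    I.LPICc (fun a => s * μ₁ a + t * μ₂ a)
      (fun i a ω => s * x₁ i a ω + t * x₂ i a ω) := by
  intro i ai ai'
  have key : ∀ (g : I.Profile → I.Out → ℝ) (κ : ℝ),
      (∑ a : I.Profile, if a i = ai then
          (∑ ω, (s * x₁ i a ω + t * x₂ i a ω) * g a ω) - (s * μ₁ a + t * μ₂ a) * κ else 0)
        = s * (∑ a : I.Profile, if a i = ai then (∑ ω, x₁ i a ω * g a ω) - μ₁ a * κ else 0)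
          + t * (∑ a : I.Profile, if a i = ai then (∑ ω, x₂ i a ω * g a ω) - μ₂ a * κ else 0) := by
    intro g κ
    rw [Finset.mul_sum, Finset.mul_sum, ← Finset.sum_add_distrib]
    refine Finset.sum_congr rfl fun a _ => ?_
    split_ifs
    · have hω : ∑ ω, (s * x₁ i a ω + t * x₂ i a ω) * g a ω
          = s * ∑ ω, x₁ i a ω * g a ω + t * ∑ ω, x₂ i a ω * g a ω := by
        rw [Finset.mul_sum, Finset.mul_sum, ← Finset.sum_add_distrib]
        exact Finset.sum_congr rfl fun ω _ => by ring
      rw [hω]; ring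
    · simp
  have k1 := key I.F (I.c i ai)
  have k2 := key (fun p ω => I.F (Function.update p i ai') ω) (I.c i ai')
  have l1 := h1 i ai ai'
  have l2 := h2 i ai ai'
  exact le_trans (le_of_eq k2)
    (le_trans (add_le_add (mul_le_mul_of_nonneg_left l1 hs) (mul_le_mul_of_nonneg_left l2 ht))
      (le_of_eq k1.symm))

/-- The LP objective is linear in `(μ, x)` (two-term mixture). -/
lemma LPobj_mix (μ₁ μ₂ : I.Profile → ℝ) (x₁ x₂ : Fin I.n → I.Profile → I.Out → ℝ) (s t : ℝ) :
    I.LPobj (fun a => s * μ₁ a + t * μ₂ a) (fun i a ω => s * x₁ i a ω + t * x₂ i a ω)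
      = s * I.LPobj μ₁ x₁ + t * I.LPobj μ₂ x₂ := by
  unfold LPobj
  rw [Finset.mul_sum, Finset.mul_sum, ← Finset.sum_add_distrib]
  refine Finset.sum_congr rfl fun a _ => ?_
  rw [Finset.mul_sum, Finset.mul_sum, ← Finset.sum_add_distrib]
  refine Finset.sum_congr rfl fun ω _ => ?_
  have hi : ∑ i, (s * x₁ i a ω + t * x₂ i a ω) = s * ∑ i, x₁ i a ω + t * ∑ i, x₂ i a ω := by
    rw [Finset.mul_sum, Finset.mul_sum, ← Finset.sum_add_distrib]
  rw [hi]; ring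

/-- The LP objective is at most 1. -/
lemma LPobj_le_one {μ : I.Profile → ℝ} {x : Fin I.n → I.Profile → I.Out → ℝ}
    (hd : I.IsDistrib μ) (hx : ∀ i a ω, 0 ≤ x i a ω) : I.LPobj μ x ≤ 1 := by
  have step : ∀ a : I.Profile, ∑ ω, I.F a ω * (μ a * I.r ω - ∑ i, x i a ω) ≤ μ a := by
    intro a
    calc ∑ ω, I.F a ω * (μ a * I.r ω - ∑ i, x i a ω)
        ≤ ∑ ω, I.F a ω * (μ a * 1) := by
          refine Finset.sum_le_sum fun ω _ => mul_le_mul_of_nonneg_left ?_ (I.F_nonneg a ω)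
          have h1 : μ a * I.r ω ≤ μ a * 1 := mul_le_mul_of_nonneg_left (I.r_le_one ω) (hd.1 a)
          have h0 : (0:ℝ) ≤ ∑ i, x i a ω := Finset.sum_nonneg fun i _ => hx i a ω
          linarith
      _ = μ a := by rw [← Finset.sum_mul, I.F_sum_one, one_mul, mul_one]
  calc I.LPobj μ x ≤ ∑ a : I.Profile, μ a := Finset.sum_le_sum fun a _ => step a
    _ = 1 := hd.2

end PMA

/-- If `𝒜°_R` is nonempty, then for every `ε > 0` and `K > 0` there exists
a finite `M > 0` such that every feasible solution `(μ, x)` of `LP(∞, 𝒜°_R)` with all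
`x^i_a(ω) ≤ K` can be transformed into a feasible solution `(μ̄, x̄)` of `LP(M, 𝒜°_R)` whose
objective is at least that of `(μ, x)` minus `ε`. -/
theorem lp_bounded_payment_transformation (I : PMA) (hne : I.AindR.Nonempty)
    (ε K : ℝ) (hε : 0 < ε) (hK : 0 < K) :
    ∃ M : ℝ, 0 < M ∧
      ∀ (μ : I.Profile → ℝ) (x : Fin I.n → I.Profile → I.Out → ℝ),
        I.LPFeasInf I.AindR μ x →
        (∀ (i : Fin I.n) (a : I.Profile) (ω : I.Out), x i a ω ≤ K) →
        ∃ (μ' : I.Profile → ℝ) (x' : Fin I.n → I.Profile → I.Out → ℝ),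
          I.LPFeas M I.AindR μ' x' ∧ I.LPobj μ x - ε ≤ I.LPobj μ' x' := by
  classical
  -- Step 1: a feasible solution with full support on `AindR`.
  have h0 : ∃ (μ₀ : I.Profile → ℝ) (x₀ : Fin I.n → I.Profile → I.Out → ℝ),
      I.LPFeasInf I.AindR μ₀ x₀ ∧ ∀ a ∈ I.AindR, 0 < μ₀ a := by
    set S : Finset I.Profile := Set.Finite.toFinset (Set.toFinite I.AindR) with hSdef
    have hmem : ∀ a : I.Profile, a ∈ S ↔ a ∈ I.AindR := fun a => Set.Finite.mem_toFinset _
    have hS : S.Nonempty := ⟨hne.choose, (hmem _).2 hne.choose_spec⟩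
    have hcard : (0:ℝ) < (S.card : ℝ) := by
      exact_mod_cast Finset.card_pos.2 hS
    choose! ν π hRIC hposb using fun (b : I.Profile) (hb : b ∈ I.AindR) => hb
    have hfb : ∀ b ∈ S, I.LPFeasInf I.AindR (ν b) (fun i a ω => ν b a * π b i a ω) :=
      fun b hb => I.randIC_LPFeasInf (hRIC b ((hmem b).1 hb))
    have hcinv : (0:ℝ) ≤ (S.card : ℝ)⁻¹ := inv_nonneg.2 hcard.le
    refine ⟨fun a => ∑ b ∈ S, (S.card : ℝ)⁻¹ * ν b a,
            fun i a ω => ∑ b ∈ S, (S.card : ℝ)⁻¹ * (ν b a * π b i a ω), ⟨⟨?_, ?_⟩, ?_, ?_, ?_⟩, ?_⟩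
    · exact fun a => Finset.sum_nonneg fun b hb => mul_nonneg hcinv ((hfb b hb).1.1 a)
    · rw [Finset.sum_comm]
      have hb1 : ∀ b ∈ S, (∑ a : I.Profile, (S.card : ℝ)⁻¹ * ν b a) = (S.card : ℝ)⁻¹ := by
        intro b hb
        rw [← Finset.mul_sum, (hfb b hb).1.2, mul_one]
      rw [Finset.sum_congr rfl hb1, Finset.sum_const, nsmul_eq_mul,
        mul_inv_cancel₀ (ne_of_gt hcard)]
    · exact fun i a ω => Finset.sum_nonneg fun b hb =>
        mul_nonneg hcinv ((hfb b hb).2.1 i a ω)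
    · exact I.LPICc_combo S (fun _ => (S.card : ℝ)⁻¹) (fun b _ => hcinv) ν
        (fun b i a ω => ν b a * π b i a ω) (fun b hb => (hfb b hb).2.2.1)
    · intro a ha
      constructor
      · exact Finset.sum_eq_zero fun b hb => by
          rw [((hfb b hb).2.2.2 a ha).1, mul_zero]
      · intro i ω
        refine Finset.sum_eq_zero fun b hb => ?_
        have := ((hfb b hb).2.2.2 a ha).2 i ω
        simp only at this
        rw [this, mul_zero]
    · intro a ha
      have haS : a ∈ S := (hmem a).2 ha
      have hterm : (0:ℝ) < (S.card : ℝ)⁻¹ * ν a a :=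
        mul_pos (inv_pos.2 hcard) (hposb a ha)
      refine lt_of_lt_of_le hterm (Finset.single_le_sum (f := fun b => (S.card : ℝ)⁻¹ * ν b a)
        (fun b hb => mul_nonneg hcinv ((hfb b hb).1.1 a)) haS)
  obtain ⟨μ₀, x₀, hfeas₀, hpos₀⟩ := h0
  -- Step 2: bounds for the fixed solution.
  obtain ⟨C, hC0, hC⟩ : ∃ C : ℝ, 0 < C ∧ ∀ i a ω, x₀ i a ω ≤ C := by
    refine ⟨(∑ i, ∑ a : I.Profile, ∑ ω, x₀ i a ω) + 1, ?_, ?_⟩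
    · have : (0:ℝ) ≤ ∑ i, ∑ a : I.Profile, ∑ ω, x₀ i a ω :=
        Finset.sum_nonneg fun i _ => Finset.sum_nonneg fun a _ =>
          Finset.sum_nonneg fun ω _ => hfeas₀.2.1 i a ω
      linarith
    · intro i a ω
      have h1 : x₀ i a ω ≤ ∑ ω', x₀ i a ω' :=
        Finset.single_le_sum (fun ω' _ => hfeas₀.2.1 i a ω') (Finset.mem_univ ω)
      have h2 : (∑ ω', x₀ i a ω') ≤ ∑ a' : I.Profile, ∑ ω', x₀ i a' ω' :=
        Finset.single_le_sum (f := fun a' => ∑ ω', x₀ i a' ω')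
          (fun a' _ => Finset.sum_nonneg fun ω' _ => hfeas₀.2.1 i a' ω') (Finset.mem_univ a)
      have h3 : (∑ a' : I.Profile, ∑ ω', x₀ i a' ω')
          ≤ ∑ i', ∑ a' : I.Profile, ∑ ω', x₀ i' a' ω' :=
        Finset.single_le_sum (f := fun i' => ∑ a' : I.Profile, ∑ ω', x₀ i' a' ω')
          (fun i' _ => Finset.sum_nonneg fun a' _ =>
            Finset.sum_nonneg fun ω' _ => hfeas₀.2.1 i' a' ω') (Finset.mem_univ i)
      linarith
  obtain ⟨m, hm0, hm⟩ : ∃ m : ℝ, 0 < m ∧ ∀ a ∈ I.AindR, m ≤ μ₀ a := by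
    set S : Finset I.Profile := Set.Finite.toFinset (Set.toFinite I.AindR) with hSdef
    have hmem : ∀ a : I.Profile, a ∈ S ↔ a ∈ I.AindR := fun a => Set.Finite.mem_toFinset _
    have hS : S.Nonempty := ⟨hne.choose, (hmem _).2 hne.choose_spec⟩
    refine ⟨S.inf' hS μ₀, ?_, fun a ha => Finset.inf'_le μ₀ ((hmem a).2 ha)⟩
    rw [Finset.lt_inf'_iff]
    exact fun b hb => hpos₀ b ((hmem b).1 hb)
  -- Step 3: constants.
  set B : ℝ := (Fintype.card I.Profile : ℝ) * ((I.n : ℝ) * C) with hBdef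
  have hB0 : 0 ≤ B := by positivity
  set δ : ℝ := min 1 (ε / (1 + B)) with hδdef
  have hδ0 : 0 < δ := lt_min one_pos (div_pos hε (by linarith))
  have hδ1 : δ ≤ 1 := min_le_left _ _
  have h1δ : 0 ≤ 1 - δ := sub_nonneg.2 hδ1
  have hδε : δ * (1 + B) ≤ ε := by
    have h1 : δ ≤ ε / (1 + B) := min_le_right _ _
    calc δ * (1 + B) ≤ (ε / (1 + B)) * (1 + B) :=
          mul_le_mul_of_nonneg_right h1 (by linarith)
      _ = ε := div_mul_cancel₀ ε (by linarith)
  refine ⟨(K + C) / (δ * m), div_pos (by linarith) (mul_pos hδ0 hm0), ?_⟩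
  set M : ℝ := (K + C) / (δ * m) with hMdef
  have hM0 : 0 < M := div_pos (by linarith) (mul_pos hδ0 hm0)
  -- Step 4: the transformation.
  intro μ x hfeas hxK
  have hobj₀ : -B ≤ I.LPobj μ₀ x₀ := by
    have step : ∀ a : I.Profile,
        -(((I.n : ℝ)) * C) ≤ ∑ ω, I.F a ω * (μ₀ a * I.r ω - ∑ i, x₀ i a ω) := by
      intro a
      have hsx : ∀ ω, (∑ i, x₀ i a ω) ≤ (I.n : ℝ) * C := by
        intro ω
        calc (∑ i, x₀ i a ω) ≤ ∑ _i : Fin I.n, C :=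
              Finset.sum_le_sum fun i _ => hC i a ω
          _ = (I.n : ℝ) * C := by
              rw [Finset.sum_const, Finset.card_univ, Fintype.card_fin, nsmul_eq_mul]
      calc -(((I.n : ℝ)) * C) = ∑ ω, I.F a ω * (-(((I.n : ℝ)) * C)) := by
            rw [← Finset.sum_mul, I.F_sum_one, one_mul]
        _ ≤ ∑ ω, I.F a ω * (μ₀ a * I.r ω - ∑ i, x₀ i a ω) := by
            refine Finset.sum_le_sum fun ω _ => mul_le_mul_of_nonneg_left ?_ (I.F_nonneg a ω)
            have h1 : (0:ℝ) ≤ μ₀ a * I.r ω := mul_nonneg (hfeas₀.1.1 a) (I.r_nonneg ω)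
            have h2 := hsx ω
            linarith
    calc -B = ∑ _a : I.Profile, -(((I.n : ℝ)) * C) := by
          rw [Finset.sum_const, Finset.card_univ, nsmul_eq_mul, hBdef]; ring
      _ ≤ I.LPobj μ₀ x₀ := Finset.sum_le_sum fun a _ => step a
  have hobj1 : I.LPobj μ x ≤ 1 := I.LPobj_le_one hfeas.1 hfeas.2.1
  refine ⟨fun a => (1 - δ) * μ a + δ * μ₀ a,
          fun i a ω => (1 - δ) * x i a ω + δ * x₀ i a ω, ⟨⟨⟨?_, ?_⟩, ?_, ?_, ?_⟩, ?_⟩, ?_⟩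
  · exact fun a => add_nonneg (mul_nonneg h1δ (hfeas.1.1 a)) (mul_nonneg hδ0.le (hfeas₀.1.1 a))
  · rw [Finset.sum_add_distrib, ← Finset.mul_sum, ← Finset.mul_sum, hfeas.1.2, hfeas₀.1.2]
    ring
  · exact fun i a ω => add_nonneg (mul_nonneg h1δ (hfeas.2.1 i a ω))
      (mul_nonneg hδ0.le (hfeas₀.2.1 i a ω))
  · exact I.LPICc_mix (1 - δ) δ h1δ hδ0.le hfeas.2.2.1 hfeas₀.2.2.1
  · intro a ha
    constructor
    · show (1 - δ) * μ a + δ * μ₀ a = 0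
      rw [(hfeas.2.2.2 a ha).1, (hfeas₀.2.2.2 a ha).1, mul_zero, mul_zero, add_zero]
    · intro i ω
      show (1 - δ) * x i a ω + δ * x₀ i a ω = 0
      rw [(hfeas.2.2.2 a ha).2 i ω, (hfeas₀.2.2.2 a ha).2 i ω, mul_zero, mul_zero, add_zero]
  · intro i a ω
    show (1 - δ) * x i a ω + δ * x₀ i a ω ≤ M * ((1 - δ) * μ a + δ * μ₀ a)
    by_cases ha : a ∈ I.AindR
    · have h1 : (1 - δ) * x i a ω + δ * x₀ i a ω ≤ K + C := by
        have e1 : (1 - δ) * x i a ω ≤ (1 - δ) * K := mul_le_mul_of_nonneg_left (hxK i a ω) h1δ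
        have e2 : δ * x₀ i a ω ≤ δ * C := mul_le_mul_of_nonneg_left (hC i a ω) hδ0.le
        have e3 : (0:ℝ) ≤ δ * K := mul_nonneg hδ0.le hK.le
        have e4 : δ * C ≤ 1 * C := mul_le_mul_of_nonneg_right hδ1 hC0.le
        nlinarith
      have h2 : δ * m ≤ (1 - δ) * μ a + δ * μ₀ a := by
        have e1 : δ * m ≤ δ * μ₀ a := mul_le_mul_of_nonneg_left (hm a ha) hδ0.le
        have e2 : (0:ℝ) ≤ (1 - δ) * μ a := mul_nonneg h1δ (hfeas.1.1 a)
        linarith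
      calc (1 - δ) * x i a ω + δ * x₀ i a ω ≤ K + C := h1
        _ = M * (δ * m) := by
            rw [hMdef, div_mul_cancel₀ _ (ne_of_gt (mul_pos hδ0 hm0))]
        _ ≤ M * ((1 - δ) * μ a + δ * μ₀ a) := mul_le_mul_of_nonneg_left h2 hM0.le
    · have hx0 : x i a ω = 0 := (hfeas.2.2.2 a ha).2 i ω
      have hx0' : x₀ i a ω = 0 := (hfeas₀.2.2.2 a ha).2 i ω
      rw [hx0, hx0', mul_zero, mul_zero, add_zero]
      exact mul_nonneg hM0.le
        (add_nonneg (mul_nonneg h1δ (hfeas.1.1 a)) (mul_nonneg hδ0.le (hfeas₀.1.1 a)))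
  · have hobjmix := I.LPobj_mix μ μ₀ x x₀ (1 - δ) δ
    rw [hobjmix]
    set o := I.LPobj μ x
    set o₀ := I.LPobj μ₀ x₀
    have e1 : δ * (o - o₀) ≤ δ * (1 + B) :=
      mul_le_mul_of_nonneg_left (by linarith) hδ0.le
    nlinarith
end

section
/- Fix a principal-multi-agent instance with n agents and let p : Ω → ℝ≥0 be any payment scheme. Define the per-agent payment scheme p̄ = (p̄^i)_{i∈N} by p̄^i(ω) = p(ω)/n for all i ∈ N and ω ∈ Ω. Then B^n(p) ⊆ E(p̄): every action profile that is a best response to p in the single-agent problem with costs scaled by n is a Nash equilibrium of the multi-agent game induced by p̄. -/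
open scoped Classical BigOperators

/-- For any payment scheme `p : Ω → ℝ≥0`, every best response `a` to `p` in
the single-agent problem with costs scaled by `n` is a Nash equilibrium of the multi-agent
game induced by the per-agent payments `p̄^i(ω) = p(ω)/n`. -/
theorem virtual_best_response_is_equilibrium (I : PMA) (p : I.Out → ℝ)
    (hp : ∀ ω, 0 ≤ p ω) (a : I.Profile) (ha : a ∈ I.BestResp (I.n : ℝ) p) :
    ∀ (i : Fin I.n) (ai' : I.A i),
      (∑ ω, I.F a ω * (p ω / (I.n : ℝ))) - I.c i (a i) ≥
        (∑ ω, I.F (Function.update a i ai') ω * (p ω / (I.n : ℝ))) - I.c i ai' := by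
  intro i ai'
  have hbr := ha (Function.update a i ai')
  have hn : (0 : ℝ) < (I.n : ℝ) := by exact_mod_cast I.npos
  -- cost difference
  have hcost : I.cost (Function.update a i ai') = I.cost a - I.c i (a i) + I.c i ai' := by
    unfold PMA.cost
    rw [← Finset.sum_erase_add _ _ (Finset.mem_univ i),
        ← Finset.sum_erase_add _ (fun j => I.c j (a j)) (Finset.mem_univ i)]
    have herase : ∑ j ∈ Finset.univ.erase i, I.c j (Function.update a i ai' j) =
        ∑ j ∈ Finset.univ.erase i, I.c j (a j) := by
      refine Finset.sum_congr rfl fun j hj => ?_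
      rw [Function.update_of_ne (Finset.ne_of_mem_erase hj)]
    rw [herase, Function.update_self]
    ring
  -- rewrite payments: ∑ F ω * (p ω / n) = (∑ F ω * p ω) / n
  have hdiv : ∀ b : I.Profile,
      (∑ ω, I.F b ω * (p ω / (I.n : ℝ))) = (∑ ω, I.F b ω * p ω) / (I.n : ℝ) := by
    intro b
    rw [Finset.sum_div]
    refine Finset.sum_congr rfl fun ω _ => ?_
    ring
  rw [hdiv, hdiv]
  rw [hcost] at hbr
  have h2 : ((∑ ω, I.F (Function.update a i ai') ω * p ω) -
      (∑ ω, I.F a ω * p ω)) / (I.n : ℝ) ≤ I.c i ai' - I.c i (a i) := by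
    rw [div_le_iff₀ hn]
    nlinarith [hbr]
  rw [div_le_iff₀ hn] at h2
  have h3 : ((∑ ω, I.F (Function.update a i ai') ω * p ω) -
      (∑ ω, I.F a ω * p ω)) / (I.n : ℝ) ≤ I.c i ai' - I.c i (a i) := by
    rw [div_le_iff₀ hn]; linarith
  rw [sub_div] at h3
  linarith
end

section
/- For every principal-multi-agent instance with n agents, Opt_D ≥ Opt_S^n: the optimal principal utility over incentive-compatible deterministic multi-agent contracts is at least the optimal principal utility in the associated single-agent combinatorial problem in which the cost of every joint action profile is multiplied by n. -/
open scoped Classical BigOperators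

/-- For every principal-multi-agent instance with `n` agents,
`Opt_D ≥ Opt_S^n`: the optimal IC deterministic multi-agent principal utility is at least
the optimal single-agent combinatorial principal utility with costs multiplied by `n`. -/
theorem optD_ge_optS_n (I : PMA) : I.OptS (I.n : ℝ) ≤ I.OptD := by
  have npos : (0:ℝ) < I.n := by exact_mod_cast I.npos
  have hn : (I.n:ℝ) ≠ 0 := ne_of_gt npos
  have costupd : ∀ (a : I.Profile) (i : Fin I.n) (b : I.A i),
      I.cost (Function.update a i b) = I.c i b + ∑ j ∈ Finset.univ.erase i, I.c j (a j) := by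
    intro a i b
    rw [PMA.cost, ← Finset.add_sum_erase _ _ (Finset.mem_univ i)]
    simp only [Function.update_self]
    congr 1
    refine Finset.sum_congr rfl fun j hj => ?_
    rw [Function.update_of_ne (Finset.ne_of_mem_erase hj)]
  have costself : ∀ (a : I.Profile) (i : Fin I.n),
      I.cost a = I.c i (a i) + ∑ j ∈ Finset.univ.erase i, I.c j (a j) := by
    intro a i
    have := costupd a i (a i)
    rwa [Function.update_eq_self] at this
  apply csSup_le_csSup
  · -- BddAbove of the deterministic set
    refine ⟨1, ?_⟩
    rintro u ⟨a, p, ⟨hp, _⟩, rfl⟩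
    calc I.detUtil a p ≤ ∑ ω, I.F a ω * I.r ω := by
          apply Finset.sum_le_sum
          intro ω _
          apply mul_le_mul_of_nonneg_left _ (I.F_nonneg a ω)
          have : 0 ≤ ∑ i, p i ω := Finset.sum_nonneg fun i _ => hp i ω
          linarith
      _ ≤ ∑ ω, I.F a ω := Finset.sum_le_sum fun ω _ => by
          nlinarith [I.F_nonneg a ω, I.r_le_one ω]
      _ = 1 := I.F_sum_one a
  · -- the single-agent set is nonempty (use p = 0 and a zero-cost profile)
    obtain ⟨a0, ha0⟩ : ∃ a0 : I.Profile, ∀ i, I.c i (a0 i) = 0 :=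
      ⟨fun i => (I.c_zero i).choose, fun i => (I.c_zero i).choose_spec⟩
    have hc0 : I.cost a0 = 0 := by
      rw [PMA.cost]
      exact Finset.sum_eq_zero fun i _ => ha0 i
    refine ⟨∑ ω, I.F a0 ω * (I.r ω - (0:ℝ)), fun _ => 0, a0, fun ω => le_refl 0, ?_, rfl⟩
    intro a'
    have hca' : 0 ≤ I.cost a' := Finset.sum_nonneg fun i _ => I.c_nonneg i (a' i)
    simp only [mul_zero, Finset.sum_const_zero, hc0]
    nlinarith
  · -- inclusion: each single-agent solution yields an IC deterministic contract
    rintro u ⟨p, a, hp, hbr, rfl⟩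
    refine ⟨a, fun _ ω => p ω / I.n, ⟨fun i ω => div_nonneg (hp ω) (le_of_lt npos), ?_⟩, ?_⟩
    · intro i ai'
      have h := hbr (Function.update a i ai')
      rw [costupd a i ai', costself a i] at h
      set x := ∑ ω, I.F a ω * p ω with hx
      set y := ∑ ω, I.F (Function.update a i ai') ω * p ω with hy
      have hsx : ∑ ω, I.F a ω * (p ω / I.n) = x / I.n := by
        rw [hx, Finset.sum_div]
        exact Finset.sum_congr rfl fun ω _ => (mul_div_assoc _ _ _).symm
      have hsy : ∑ ω, I.F (Function.update a i ai') ω * (p ω / I.n) = y / I.n := by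
        rw [hy, Finset.sum_div]
        exact Finset.sum_congr rfl fun ω _ => (mul_div_assoc _ _ _).symm
      rw [hsx, hsy, ge_iff_le]
      have key : (I.n : ℝ) * (I.c i (a i) - I.c i ai') ≤ x - y := by nlinarith
      have h2 : I.c i (a i) - I.c i ai' ≤ (x - y) / I.n := by
        rw [le_div_iff₀ npos]; nlinarith
      have h3 : x / I.n - y / I.n = (x - y) / I.n := (sub_div _ _ _).symm
      linarith
    · rw [PMA.detUtil]
      refine Finset.sum_congr rfl fun ω _ => ?_
      congr 1
      rw [Finset.sum_const, Finset.card_univ, Fintype.card_fin, nsmul_eq_mul,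
        mul_div_cancel₀ _ hn]
end

section
/- Fix a principal-multi-agent instance with n agents and δ > 0, and consider the linear single-agent payment scheme p(ω) = r_ω/(1+δ). Then every a* ∈ B^n(p) satisfies (1/(1+δ)) ∑_ω F_{a*}(ω) r_ω ≥ (1/(1+δ)) V_sw^{n(1+δ)} and ∑_ω F_{a*}(ω)(r_ω − p(ω)) = (δ/(1+δ)) ∑_ω F_{a*}(ω) r_ω ≥ (δ/(1+δ)) V_sw^{n(1+δ)}. In particular Opt_S^n ≥ (δ/(1+δ)) V_sw^{n(1+δ)}. -/
open scoped Classical BigOperators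

/-- With the linear single-agent payment scheme `p(ω) = r_ω/(1+δ)`, every
`a* ∈ B^n(p)` satisfies `(1/(1+δ)) ∑_ω F_{a*}(ω) r_ω ≥ (1/(1+δ)) V_sw^{n(1+δ)}` and
`∑_ω F_{a*}(ω)(r_ω − p(ω)) = (δ/(1+δ)) ∑_ω F_{a*}(ω) r_ω ≥ (δ/(1+δ)) V_sw^{n(1+δ)}`.
In particular `Opt_S^n ≥ (δ/(1+δ)) V_sw^{n(1+δ)}`. -/
theorem linear_single_agent_contract_bound (I : PMA) (δ : ℝ) (hδ : 0 < δ) :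
    (∀ astar ∈ I.BestResp (I.n : ℝ) (fun ω => I.r ω / (1 + δ)),
      (1 / (1 + δ)) * I.Vsw ((I.n : ℝ) * (1 + δ)) ≤
          (1 / (1 + δ)) * ∑ ω, I.F astar ω * I.r ω ∧
      (∑ ω, I.F astar ω * (I.r ω - I.r ω / (1 + δ))) =
          (δ / (1 + δ)) * ∑ ω, I.F astar ω * I.r ω ∧
      (δ / (1 + δ)) * I.Vsw ((I.n : ℝ) * (1 + δ)) ≤
          ∑ ω, I.F astar ω * (I.r ω - I.r ω / (1 + δ))) ∧
    (δ / (1 + δ)) * I.Vsw ((I.n : ℝ) * (1 + δ)) ≤ I.OptS (I.n : ℝ) := by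
  have h1δ : (0:ℝ) < 1 + δ := by linarith
  have hdiv : ∀ b : I.Profile,
      ∑ ω, I.F b ω * (I.r ω / (1 + δ)) = (∑ ω, I.F b ω * I.r ω) / (1 + δ) := by
    intro b; rw [Finset.sum_div]; exact Finset.sum_congr rfl fun ω _ => by ring
  have hcost : ∀ b : I.Profile, 0 ≤ I.cost b := fun b =>
    Finset.sum_nonneg fun i _ => I.c_nonneg i _
  have hn : (0:ℝ) ≤ (I.n : ℝ) := Nat.cast_nonneg _
  have hmain : ∀ astar ∈ I.BestResp (I.n : ℝ) (fun ω => I.r ω / (1 + δ)),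
      I.Vsw ((I.n : ℝ) * (1 + δ)) ≤ ∑ ω, I.F astar ω * I.r ω := by
    intro a ha
    apply ciSup_le
    intro a'
    have hba := ha a'
    rw [hdiv, hdiv] at hba
    have h2 := mul_le_mul_of_nonneg_right hba h1δ.le
    have hca := hcost a
    have hca' := hcost a'
    have hX : (∑ ω, I.F a' ω * I.r ω) / (1 + δ) * (1 + δ) = ∑ ω, I.F a' ω * I.r ω :=
      div_mul_cancel₀ _ (ne_of_gt h1δ)
    have hY : (∑ ω, I.F a ω * I.r ω) / (1 + δ) * (1 + δ) = ∑ ω, I.F a ω * I.r ω :=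
      div_mul_cancel₀ _ (ne_of_gt h1δ)
    nlinarith [mul_nonneg (mul_nonneg hn h1δ.le) hca]
  have heq : ∀ astar : I.Profile,
      (∑ ω, I.F astar ω * (I.r ω - I.r ω / (1 + δ))) =
        (δ / (1 + δ)) * ∑ ω, I.F astar ω * I.r ω := by
    intro a
    rw [Finset.mul_sum]
    refine Finset.sum_congr rfl fun ω _ => ?_
    field_simp
    ring
  constructor
  · intro astar hastar
    have h1 := hmain astar hastar
    refine ⟨?_, heq astar, ?_⟩
    · apply mul_le_mul_of_nonneg_left h1
      positivity
    · rw [heq astar]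
      apply mul_le_mul_of_nonneg_left h1
      positivity
  · -- existence of a best response
    obtain ⟨a, ha⟩ := Finite.exists_max
      (fun b : I.Profile => (∑ ω, I.F b ω * (I.r ω / (1 + δ))) - (I.n : ℝ) * I.cost b)
    have hmem : a ∈ I.BestResp (I.n : ℝ) (fun ω => I.r ω / (1 + δ)) := fun a' => ha a'
    have hval : (δ / (1 + δ)) * I.Vsw ((I.n : ℝ) * (1 + δ)) ≤
        ∑ ω, I.F a ω * (I.r ω - I.r ω / (1 + δ)) := by
      rw [heq a]
      apply mul_le_mul_of_nonneg_left (hmain a hmem)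
      positivity
    refine le_trans hval (le_csSup ?_ ?_)
    · refine ⟨1, ?_⟩
      rintro u ⟨p, b, hp, _, rfl⟩
      calc ∑ ω, I.F b ω * (I.r ω - p ω) ≤ ∑ ω, I.F b ω * I.r ω := by
            apply Finset.sum_le_sum
            intro ω _
            apply mul_le_mul_of_nonneg_left _ (I.F_nonneg b ω)
            linarith [hp ω]
        _ ≤ ∑ ω, I.F b ω * 1 := by
            apply Finset.sum_le_sum
            intro ω _
            exact mul_le_mul_of_nonneg_left (I.r_le_one ω) (I.F_nonneg b ω)
        _ = 1 := by simp [I.F_sum_one b]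
    · exact ⟨fun ω => I.r ω / (1 + δ), a, fun ω => div_nonneg (I.r_nonneg ω) h1δ.le, hmem, rfl⟩
end

section
/- For every principal-multi-agent instance with n agents and every δ > 0, Opt_D ≥ (δ/(1+δ)) V_sw^{n(1+δ)}. Moreover this is achieved by a linear contract: with per-agent payments p^i(ω) = r_ω/(n(1+δ)) for every i ∈ N, there exists an action profile a* such that (a*, p) is an incentive-compatible deterministic contract with principal utility at least (δ/(1+δ)) V_sw^{n(1+δ)}. -/
open scoped Classical BigOperators

/-- For every instance and every `δ > 0`,
`Opt_D ≥ (δ/(1+δ)) V_sw^{n(1+δ)}`; moreover this is achieved by the linear contract paying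
each agent `p^i(ω) = r_ω/(n(1+δ))`: some action profile `a*` makes `(a*, p)` an IC
deterministic contract with principal utility at least `(δ/(1+δ)) V_sw^{n(1+δ)}`. -/
theorem linear_contract_virtual_welfare_approx (I : PMA) (δ : ℝ) (hδ : 0 < δ) :
    (δ / (1 + δ)) * I.Vsw ((I.n : ℝ) * (1 + δ)) ≤ I.OptD ∧
    ∃ astar : I.Profile,
      I.DetIC astar (fun _ ω => I.r ω / ((I.n : ℝ) * (1 + δ))) ∧
      (δ / (1 + δ)) * I.Vsw ((I.n : ℝ) * (1 + δ)) ≤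
        I.detUtil astar (fun _ ω => I.r ω / ((I.n : ℝ) * (1 + δ))) := by
  set K : ℝ := (I.n : ℝ) * (1 + δ) with hKdef
  have hδ1 : (0:ℝ) < 1 + δ := by linarith
  have hn : (0:ℝ) < (I.n : ℝ) := by exact_mod_cast I.npos
  have hK : 0 < K := mul_pos hn hδ1
  -- the virtual welfare objective
  set g : I.Profile → ℝ := fun a => (∑ ω, I.F a ω * I.r ω) - K * I.cost a with hgdef
  obtain ⟨astar, -, hmax⟩ := Finset.exists_max_image (Finset.univ : Finset I.Profile) g
    Finset.univ_nonempty
  have hmax' : ∀ a : I.Profile, g a ≤ g astar := fun a => hmax a (Finset.mem_univ a)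
  set p : Fin I.n → I.Out → ℝ := fun _ ω => I.r ω / K with hpdef
  -- payment expectation identity
  have hexp : ∀ a : I.Profile, (∑ ω, I.F a ω * (I.r ω / K)) =
      (∑ ω, I.F a ω * I.r ω) / K := by
    intro a
    rw [Finset.sum_div]
    exact Finset.sum_congr rfl fun ω _ => by ring
  -- cost of a unilateral deviation
  have hcost : ∀ (i : Fin I.n) (ai' : I.A i),
      I.cost (Function.update astar i ai') = I.cost astar - I.c i (astar i) + I.c i ai' := by
    intro i ai'
    have h1 : ∀ j : Fin I.n, I.c j (Function.update astar i ai' j) =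
        I.c j (astar j) + (if j = i then I.c i ai' - I.c i (astar i) else 0) := by
      intro j
      by_cases hj : j = i
      · subst hj; simp
      · simp [Function.update_of_ne hj, hj]
    unfold PMA.cost
    rw [Finset.sum_congr rfl fun j _ => h1 j, Finset.sum_add_distrib,
      Finset.sum_ite_eq' Finset.univ i]
    simp [PMA.cost]
    ring
  -- IC
  have hIC : I.DetIC astar p := by
    constructor
    · intro i ω
      exact div_nonneg (I.r_nonneg ω) hK.le
    · intro i ai'
      have hg := hmax' (Function.update astar i ai')
      rw [hgdef] at hg
      simp only [hcost i ai'] at hg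
      have h2 : (∑ ω, I.F (Function.update astar i ai') ω * I.r ω) / K -
          I.c i ai' ≤ (∑ ω, I.F astar ω * I.r ω) / K - I.c i (astar i) := by
        rw [div_sub' hK.ne', div_sub' hK.ne', div_le_div_iff₀ hK hK]
        nlinarith [hg]
      simp only [hpdef, ge_iff_le, hexp]
      linarith
  -- principal utility of the linear contract
  have hsum_p : ∀ ω, (∑ _i : Fin I.n, I.r ω / K) = (I.n : ℝ) * (I.r ω / K) := by
    intro ω; rw [Finset.sum_const]; simp [mul_comm]
  have hutil : I.detUtil astar p = (δ / (1 + δ)) * (∑ ω, I.F astar ω * I.r ω) := by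
    unfold PMA.detUtil
    rw [Finset.mul_sum]
    refine Finset.sum_congr rfl fun ω _ => ?_
    simp only [hpdef, hsum_p ω]
    rw [hKdef]
    field_simp
    ring
  -- Vsw ≤ R(astar)
  have hR_nonneg : ∀ a : I.Profile, (0:ℝ) ≤ ∑ ω, I.F a ω * I.r ω := by
    intro a
    exact Finset.sum_nonneg fun ω _ => mul_nonneg (I.F_nonneg a ω) (I.r_nonneg ω)
  have hcost_nonneg : ∀ a : I.Profile, 0 ≤ I.cost a :=
    fun a => Finset.sum_nonneg fun i _ => I.c_nonneg i (a i)
  have hVsw : I.Vsw K ≤ ∑ ω, I.F astar ω * I.r ω := by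
    unfold PMA.Vsw
    refine ciSup_le fun a => ?_
    have := hmax' a
    rw [hgdef] at this
    have h3 : K * I.cost astar ≥ 0 := mul_nonneg hK.le (hcost_nonneg astar)
    simp only at this
    linarith
  have hδδ : (0:ℝ) ≤ δ / (1 + δ) := div_nonneg hδ.le hδ1.le
  have hmain : (δ / (1 + δ)) * I.Vsw K ≤ I.detUtil astar p := by
    rw [hutil]
    exact mul_le_mul_of_nonneg_left hVsw hδδ
  refine ⟨?_, astar, hIC, hmain⟩
  -- OptD part
  have hmem : I.detUtil astar p ∈ {u | ∃ a q, I.DetIC a q ∧ u = I.detUtil a q} :=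
    ⟨astar, p, hIC, rfl⟩
  have hbdd : BddAbove {u | ∃ a q, I.DetIC a q ∧ u = I.detUtil a q} := by
    refine ⟨1, fun u hu => ?_⟩
    obtain ⟨a, q, ⟨hq, -⟩, rfl⟩ := hu
    unfold PMA.detUtil
    calc ∑ ω, I.F a ω * (I.r ω - ∑ i, q i ω)
        ≤ ∑ ω, I.F a ω * 1 := by
          refine Finset.sum_le_sum fun ω _ => ?_
          refine mul_le_mul_of_nonneg_left ?_ (I.F_nonneg a ω)
          have : 0 ≤ ∑ i, q i ω := Finset.sum_nonneg fun i _ => hq i ω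
          have := I.r_le_one ω
          linarith
      _ = 1 := by simp [I.F_sum_one a]
  calc (δ / (1 + δ)) * I.Vsw K ≤ I.detUtil astar p := hmain
    _ ≤ I.OptD := le_csSup hbdd hmem
end

section
/- Fix a principal-multi-agent instance with n agents such that ∑_ω F_a(ω) r_ω − c(a) > 0 for every a ∈ 𝒜, and let β := max_{a∈𝒜} c(a) / ( ∑_ω F_a(ω) r_ω − c(a) ). Then for every δ > 0, Opt_D ≥ (δ/(1+δ)) · (1 − β n (1+δ)) · Sw, and this approximation is guaranteed by a linear contract (each agent i is paid p^i(ω) = r_ω/(n(1+δ)) for every outcome ω). -/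
open scoped Classical BigOperators

namespace PMA

variable (I : PMA)

lemma cost_nonneg' (a : I.Profile) : 0 ≤ I.cost a :=
  Finset.sum_nonneg fun i _ => I.c_nonneg i (a i)

lemma cost_update' (a : I.Profile) (i : Fin I.n) (x : I.A i) :
    I.cost (Function.update a i x) - I.cost a = I.c i x - I.c i (a i) := by
  unfold PMA.cost
  rw [← Finset.sum_sub_distrib, Finset.sum_eq_single i]
  · rw [Function.update_self]
  · intro b _ hb
    rw [Function.update_of_ne hb, sub_self]
  · intro h; exact absurd (Finset.mem_univ i) h

lemma sum_F_mul_div (a : I.Profile) (K : ℝ) :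
    ∑ ω, I.F a ω * (I.r ω / K) = (∑ ω, I.F a ω * I.r ω) / K := by
  rw [Finset.sum_div]
  exact Finset.sum_congr rfl fun ω _ => (mul_div_assoc _ _ _).symm

end PMA

/-- If `∑_ω F_a(ω) r_ω − c(a) > 0` for every `a`, then with
`β := max_a c(a)/(∑_ω F_a(ω) r_ω − c(a))`, for every `δ > 0` it holds that
`Opt_D ≥ (δ/(1+δ))(1 − βn(1+δ))·Sw`, and the approximation is guaranteed by the linear
contract paying each agent `p^i(ω) = r_ω/(n(1+δ))`. -/
theorem linear_contract_welfare_approx (I : PMA)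
    (hpos : ∀ a : I.Profile, 0 < (∑ ω, I.F a ω * I.r ω) - I.cost a)
    (δ : ℝ) (hδ : 0 < δ) :
    (δ / (1 + δ)) *
        (1 - (⨆ a : I.Profile, I.cost a / ((∑ ω, I.F a ω * I.r ω) - I.cost a)) *
          ((I.n : ℝ) * (1 + δ))) * I.Vsw 1 ≤ I.OptD ∧
    ∃ astar : I.Profile,
      I.DetIC astar (fun _ ω => I.r ω / ((I.n : ℝ) * (1 + δ))) ∧
      (δ / (1 + δ)) *
          (1 - (⨆ a : I.Profile, I.cost a / ((∑ ω, I.F a ω * I.r ω) - I.cost a)) *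
            ((I.n : ℝ) * (1 + δ))) * I.Vsw 1 ≤
        I.detUtil astar (fun _ ω => I.r ω / ((I.n : ℝ) * (1 + δ))) := by
  have hn : (0:ℝ) < (I.n : ℝ) := by exact_mod_cast I.npos
  have hδ1 : (0:ℝ) < 1 + δ := by linarith
  set K : ℝ := (I.n : ℝ) * (1 + δ) with hKdef
  have hKpos : 0 < K := mul_pos hn hδ1
  set β : ℝ := ⨆ a : I.Profile, I.cost a / ((∑ ω, I.F a ω * I.r ω) - I.cost a) with hβdef
  obtain ⟨astar, hstar⟩ := Finite.exists_max
    (fun a : I.Profile => (∑ ω, I.F a ω * I.r ω) - K * I.cost a)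
  obtain ⟨aopt, hopt⟩ := Finite.exists_max
    (fun a : I.Profile => (∑ ω, I.F a ω * I.r ω) - I.cost a)
  have hVsw : I.Vsw 1 = (∑ ω, I.F aopt ω * I.r ω) - I.cost aopt := by
    unfold PMA.Vsw
    apply le_antisymm
    · exact ciSup_le fun a => by simpa using hopt a
    · have := le_ciSup (f := fun a : I.Profile =>
        (∑ ω, I.F a ω * I.r ω) - 1 * I.cost a) (Finite.bddAbove_range _) aopt
      simpa using this
  -- incentive compatibility of the linear contract at astar
  have hIC : I.DetIC astar (fun _ ω => I.r ω / K) := by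
    constructor
    · intro i ω; exact div_nonneg (I.r_nonneg ω) hKpos.le
    · intro i ai'
      have h1 := hstar (Function.update astar i ai')
      have h2 := I.cost_update' astar i ai'
      simp only [ge_iff_le, I.sum_F_mul_div]
      rw [← sub_nonneg]
      have e : ((∑ ω, I.F astar ω * I.r ω) / K - I.c i (astar i)) -
          ((∑ ω, I.F (Function.update astar i ai') ω * I.r ω) / K - I.c i ai') =
          (((∑ ω, I.F astar ω * I.r ω) - K * I.cost astar) -
            ((∑ ω, I.F (Function.update astar i ai') ω * I.r ω) -
              K * I.cost (Function.update astar i ai'))) / K := by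
        field_simp
        nlinarith [h2]
      rw [e]
      apply div_nonneg _ hKpos.le
      linarith
  -- utility of the linear contract
  have hUtil : I.detUtil astar (fun _ ω => I.r ω / K) =
      (δ / (1 + δ)) * (∑ ω, I.F astar ω * I.r ω) := by
    unfold PMA.detUtil
    rw [Finset.mul_sum]
    apply Finset.sum_congr rfl
    intro ω _
    rw [Finset.sum_const, Finset.card_univ, Fintype.card_fin]
    rw [hKdef, nsmul_eq_mul]
    field_simp
    ring
  -- main inequality
  have hβb : I.cost aopt / ((∑ ω, I.F aopt ω * I.r ω) - I.cost aopt) ≤ β := by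
    rw [hβdef]
    exact le_ciSup (f := fun a : I.Profile =>
      I.cost a / ((∑ ω, I.F a ω * I.r ω) - I.cost a)) (Finite.bddAbove_range _) aopt
  have hW : 0 < (∑ ω, I.F aopt ω * I.r ω) - I.cost aopt := hpos aopt
  have hβc : I.cost aopt ≤ β * ((∑ ω, I.F aopt ω * I.r ω) - I.cost aopt) :=
    (div_le_iff₀ hW).mp hβb
  have key : (1 - β * K) * ((∑ ω, I.F aopt ω * I.r ω) - I.cost aopt) ≤
      ∑ ω, I.F astar ω * I.r ω := by
    have h1 := hstar aopt
    nlinarith [I.cost_nonneg' astar, I.cost_nonneg' aopt,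
      mul_le_mul_of_nonneg_left hβc hKpos.le,
      mul_nonneg hKpos.le (I.cost_nonneg' astar)]
  have main : (δ / (1 + δ)) * (1 - β * K) * I.Vsw 1 ≤
      I.detUtil astar (fun _ ω => I.r ω / K) := by
    rw [hUtil, hVsw, mul_assoc]
    exact mul_le_mul_of_nonneg_left key (by positivity)
  -- OptD bounds the utility of any IC contract from below via sSup
  have hBdd : BddAbove {u | ∃ a p, I.DetIC a p ∧ u = I.detUtil a p} := by
    refine ⟨1, ?_⟩
    rintro u ⟨a, q, hq, rfl⟩
    unfold PMA.detUtil
    calc ∑ ω, I.F a ω * (I.r ω - ∑ i, q i ω)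
        ≤ ∑ ω, I.F a ω * 1 := by
          apply Finset.sum_le_sum
          intro ω _
          apply mul_le_mul_of_nonneg_left _ (I.F_nonneg a ω)
          have h0 : 0 ≤ ∑ i, q i ω := Finset.sum_nonneg fun i _ => hq.1 i ω
          have := I.r_le_one ω
          linarith
      _ = 1 := by simp [I.F_sum_one a]
  have hOpt : I.detUtil astar (fun _ ω => I.r ω / K) ≤ I.OptD :=
    le_csSup hBdd ⟨astar, _, hIC, rfl⟩
  exact ⟨le_trans main hOpt, astar, hIC, main⟩
end

section
/- For every Bayesian principal-multi-agent instance, the supremum of the objective of the Bayesian linear program B-LP(∞, 𝒜†_R) over its feasible solutions is at least B-Opt_R, the supremum of the principal's expected utility over DSIC Bayesian randomized contracts. In particular, for every DSIC Bayesian randomized contract (μ, π), setting x^{λ,i}_a(ω) := μ^λ(a)·π^{λ,i}_a(ω) and z^i(λ, λ_i', a_i) := max_{a_i'∈A_i} U_i^{μ,π}(λ_i→λ_i', a_i→a_i' | λ_{-i}) yields a feasible solution of B-LP(∞, 𝒜†_R) with the same objective value. -/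
open scoped Classical BigOperators

/-- A Bayesian principal-multi-agent instance. -/
structure BPMA where
  n : ℕ
  npos : 0 < n
  Out : Type
  [fOut : Fintype Out]
  r : Out → ℝ
  r_nonneg : ∀ ω, 0 ≤ r ω
  r_le_one : ∀ ω, r ω ≤ 1
  A : Fin n → Type
  [fA : ∀ i, Fintype (A i)]
  [neA : ∀ i, Nonempty (A i)]
  Lam : Fin n → Type
  [fLam : ∀ i, Fintype (Lam i)]
  [neLam : ∀ i, Nonempty (Lam i)]
  G : (∀ i, Lam i) → ℝ
  G_nonneg : ∀ lam, 0 ≤ G lam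
  G_sum_one : ∑ lam, G lam = 1
  c : ∀ i : Fin n, Lam i → A i → ℝ
  c_nonneg : ∀ i li a, 0 ≤ c i li a
  c_le_one : ∀ i li a, c i li a ≤ 1
  c_zero : ∀ i li, ∃ a, c i li a = 0
  F : (∀ i, Lam i) → (∀ i, A i) → Out → ℝ
  F_nonneg : ∀ lam a ω, 0 ≤ F lam a ω
  F_sum_one : ∀ lam a, ∑ ω, F lam a ω = 1

attribute [instance] BPMA.fOut BPMA.fA BPMA.neA BPMA.fLam BPMA.neLam

namespace BPMA

variable (I : BPMA)

/-- Joint action profiles. -/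
abbrev Profile := ∀ i, I.A i

/-- Type profiles. -/
abbrev TProf := ∀ i, I.Lam i

/-- `μ` is a probability distribution over action profiles. -/
def IsDistrib (μ : I.Profile → ℝ) : Prop := (∀ a, 0 ≤ μ a) ∧ ∑ a, μ a = 1

/-- The (unnormalized) expected utility `U_i^{μ,π}(λ_i → λ_i', a_i → a_i' | λ_{-i})` of agent
`i` when the true type profile is `lam`, they report `li'`, receive recommendation `ai` and
play `ai'`. -/
noncomputable def Ubay (μ : I.TProf → I.Profile → ℝ)
    (π : I.TProf → Fin I.n → I.Profile → I.Out → ℝ)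
    (i : Fin I.n) (lam : I.TProf) (li' : I.Lam i) (ai ai' : I.A i) : ℝ :=
  ∑ a : I.Profile, if a i = ai then
      μ (Function.update lam i li') a *
        ((∑ ω, π (Function.update lam i li') i a ω *
          I.F lam (Function.update a i ai') ω) - I.c i (lam i) ai')
    else 0

/-- `(μ, π)` is a DSIC Bayesian randomized contract. -/
def RandDSIC (μ : I.TProf → I.Profile → ℝ)
    (π : I.TProf → Fin I.n → I.Profile → I.Out → ℝ) : Prop :=
  (∀ lam, I.IsDistrib (μ lam)) ∧ (∀ lam i a ω, 0 ≤ π lam i a ω) ∧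
  ∀ (i : Fin I.n) (lam : I.TProf) (li' : I.Lam i),
    (∑ ai : I.A i, I.Ubay μ π i lam (lam i) ai ai) ≥
      ∑ ai : I.A i, ⨆ ai' : I.A i, I.Ubay μ π i lam li' ai ai'

/-- Expected principal utility of a Bayesian randomized contract. -/
noncomputable def randUtilB (μ : I.TProf → I.Profile → ℝ)
    (π : I.TProf → Fin I.n → I.Profile → I.Out → ℝ) : ℝ :=
  ∑ lam : I.TProf, I.G lam *
    ∑ a : I.Profile, ∑ ω, μ lam a * I.F lam a ω * (I.r ω - ∑ i, π lam i a ω)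

/-- `B-Opt_R`: supremum of the principal's expected utility over DSIC randomized contracts. -/
noncomputable def BOptR : ℝ := sSup {u | ∃ μ π, I.RandDSIC μ π ∧ u = I.randUtilB μ π}

/-- The inducible action profiles at each type profile. -/
def AdagR (lam : I.TProf) : Set I.Profile :=
  {a | ∃ μ π, I.RandDSIC μ π ∧ 0 < μ lam a}

/-- Feasibility for the Bayesian linear program `B-LP(∞, A')`. -/
def BLPFeasInf (A' : I.TProf → Set I.Profile)
    (μ : I.TProf → I.Profile → ℝ)
    (x : I.TProf → Fin I.n → I.Profile → I.Out → ℝ)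
    (z : ∀ i : Fin I.n, I.TProf → I.Lam i → I.A i → ℝ) : Prop :=
  (∀ lam, I.IsDistrib (μ lam)) ∧
  (∀ lam i a ω, 0 ≤ x lam i a ω) ∧
  (∀ (i : Fin I.n) (lam : I.TProf) (li' : I.Lam i),
    (∑ a : I.Profile,
        ((∑ ω, x lam i a ω * I.F lam a ω) - μ lam a * I.c i (lam i) (a i))) ≥
      ∑ ai : I.A i, z i lam li' ai) ∧
  (∀ (i : Fin I.n) (lam : I.TProf) (li' : I.Lam i) (ai ai' : I.A i),
    z i lam li' ai ≥
      (∑ a : I.Profile, if a i = ai then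
          (∑ ω, x (Function.update lam i li') i a ω *
            I.F lam (Function.update a i ai') ω)
        else 0) -
      (∑ a : I.Profile, if a i = ai then μ (Function.update lam i li') a else 0) *
        I.c i (lam i) ai') ∧
  (∀ lam, ∀ a ∉ A' lam, μ lam a = 0 ∧ ∀ i ω, x lam i a ω = 0)

/-- The objective of the Bayesian linear program. -/
noncomputable def BLPobj (μ : I.TProf → I.Profile → ℝ)
    (x : I.TProf → Fin I.n → I.Profile → I.Out → ℝ) : ℝ :=
  ∑ lam : I.TProf, I.G lam *
    ∑ a : I.Profile, ∑ ω, I.F lam a ω * (μ lam a * I.r ω - ∑ i, x lam i a ω)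

/-- A deterministic Bayesian contract `(𝔞, p)` is DSIC. -/
def DetDSIC (act : I.TProf → I.Profile) (p : I.TProf → Fin I.n → I.Out → ℝ) : Prop :=
  ∀ (i : Fin I.n) (lam : I.TProf) (li' : I.Lam i) (ai' : I.A i),
    (∑ ω, I.F lam (act lam) ω * p lam i ω) - I.c i (lam i) (act lam i) ≥
      (∑ ω, I.F lam
          (Function.update (act (Function.update lam i li')) i ai') ω *
          p (Function.update lam i li') i ω) - I.c i (lam i) ai'

/-- Limited liability: payments are nonnegative. -/
def LL (p : I.TProf → Fin I.n → I.Out → ℝ) : Prop := ∀ lam i ω, 0 ≤ p lam i ω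

/-- Individual rationality of a deterministic Bayesian contract. -/
def IR (act : I.TProf → I.Profile) (p : I.TProf → Fin I.n → I.Out → ℝ) : Prop :=
  ∀ (lam : I.TProf) (i : Fin I.n),
    I.c i (lam i) (act lam i) ≤ ∑ ω, I.F lam (act lam) ω * p lam i ω

/-- Expected principal utility of a deterministic Bayesian contract. -/
noncomputable def detUtilB (act : I.TProf → I.Profile)
    (p : I.TProf → Fin I.n → I.Out → ℝ) : ℝ :=
  ∑ lam : I.TProf, I.G lam *
    ∑ ω, I.F lam (act lam) ω * (I.r ω - ∑ i, p lam i ω)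

/-- `B-Opt_D`: supremum of the expected principal utility over DSIC deterministic contracts
satisfying limited liability. -/
noncomputable def BOptD : ℝ :=
  sSup {u | ∃ act p, I.DetDSIC act p ∧ I.LL p ∧ u = I.detUtilB act p}

/-- `noLL-B-Opt_D`: supremum of the expected principal utility over DSIC and IR deterministic
contracts (payments may be negative). -/
noncomputable def noLLBOptD : ℝ :=
  sSup {u | ∃ act p, I.DetDSIC act p ∧ I.IR act p ∧ u = I.detUtilB act p}

/-- The α-virtual social welfare of the Bayesian instance. -/
noncomputable def VswB (α : ℝ) : ℝ :=
  ∑ lam : I.TProf, I.G lam *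
    ⨆ a : I.Profile, ((∑ ω, I.F lam a ω * I.r ω) - α * ∑ i, I.c i (lam i) (a i))

/-- `act` is a selection of the argmax defining `AffineContract_δ`. -/
def AffSel (δ : ℝ) (act : I.TProf → I.Profile) : Prop :=
  ∀ (lam : I.TProf) (a : I.Profile),
    (1 / ((I.n : ℝ) * (1 + δ))) * (∑ ω, I.F lam a ω * I.r ω) -
        ∑ i, I.c i (lam i) (a i) ≤
      (1 / ((I.n : ℝ) * (1 + δ))) * (∑ ω, I.F lam (act lam) ω * I.r ω) -
        ∑ i, I.c i (lam i) (act lam i)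

/-- The payments of `AffineContract_δ`:
`p^{λ,i}_δ(ω) = r_ω/(n(1+δ)) − ∑_{j ≠ i} c_j^{λ_j}(a^λ_{δ,j})`. -/
noncomputable def affPay (δ : ℝ) (act : I.TProf → I.Profile)
    (lam : I.TProf) (i : Fin I.n) (ω : I.Out) : ℝ :=
  I.r ω / ((I.n : ℝ) * (1 + δ)) -
    ∑ j ∈ Finset.univ.erase i, I.c j (lam j) (act lam j)

end BPMA

namespace BPMAaux

open BPMA

variable (I : BPMA)

/-- Decomposition of `Ubay` into the two sums occurring in the LP constraints. -/
lemma ubay_eq (μ : I.TProf → I.Profile → ℝ)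
    (π : I.TProf → Fin I.n → I.Profile → I.Out → ℝ)
    (i : Fin I.n) (lam : I.TProf) (li' : I.Lam i) (ai ai' : I.A i) :
    I.Ubay μ π i lam li' ai ai' =
      (∑ a : I.Profile, if a i = ai then
          (∑ ω, (μ (Function.update lam i li') a * π (Function.update lam i li') i a ω) *
            I.F lam (Function.update a i ai') ω)
        else 0) -
      (∑ a : I.Profile, if a i = ai then μ (Function.update lam i li') a else 0) *
        I.c i (lam i) ai' := by
  unfold BPMA.Ubay
  rw [Finset.sum_mul, ← Finset.sum_sub_distrib]
  refine Finset.sum_congr rfl fun a _ => ?_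
  split_ifs with h
  · rw [mul_sub, Finset.mul_sum]
    congr 1
    exact Finset.sum_congr rfl fun ω _ => by ring
  · ring

/-- The truthful-utility sum equals the LP left-hand side. -/
lemma ubay_truthful_sum (μ : I.TProf → I.Profile → ℝ)
    (π : I.TProf → Fin I.n → I.Profile → I.Out → ℝ)
    (i : Fin I.n) (lam : I.TProf) :
    ∑ ai : I.A i, I.Ubay μ π i lam (lam i) ai ai =
      ∑ a : I.Profile,
        ((∑ ω, (μ lam a * π lam i a ω) * I.F lam a ω) - μ lam a * I.c i (lam i) (a i)) := by
  unfold BPMA.Ubay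
  rw [Finset.sum_comm]
  refine Finset.sum_congr rfl fun a _ => ?_
  rw [Finset.sum_ite_eq]
  simp only [Finset.mem_univ, if_true, Function.update_eq_self]
  rw [mul_sub, Finset.mul_sum]
  congr 1
  exact Finset.sum_congr rfl fun ω _ => by ring

/-- Part 2 of the statement, as a standalone lemma. -/
lemma feas_of_dsic (μ : I.TProf → I.Profile → ℝ)
    (π : I.TProf → Fin I.n → I.Profile → I.Out → ℝ)
    (h : I.RandDSIC μ π) :
    I.BLPFeasInf I.AdagR μ (fun lam i a ω => μ lam a * π lam i a ω)
        (fun i lam li' ai => ⨆ ai' : I.A i, I.Ubay μ π i lam li' ai ai') ∧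
    I.BLPobj μ (fun lam i a ω => μ lam a * π lam i a ω) = I.randUtilB μ π := by
  obtain ⟨hdist, hπ, hdsic⟩ := h
  constructor
  · refine ⟨hdist, fun lam i a ω => mul_nonneg ((hdist lam).1 a) (hπ lam i a ω), ?_, ?_, ?_⟩
    · intro i lam li'
      have := hdsic i lam li'
      rw [ubay_truthful_sum I μ π i lam] at this
      exact this
    · intro i lam li' ai ai'
      have hb : BddAbove (Set.range fun ai' : I.A i => I.Ubay μ π i lam li' ai ai') :=
        (Set.finite_range _).bddAbove
      have := le_ciSup hb ai'
      rw [ubay_eq I μ π i lam li' ai ai'] at this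
      exact le_of_le_of_eq this rfl
    · intro lam a ha
      have hμ0 : μ lam a = 0 := by
        by_contra h0
        exact ha ⟨μ, π, ⟨hdist, hπ, hdsic⟩, lt_of_le_of_ne ((hdist lam).1 a) (Ne.symm h0)⟩
      exact ⟨hμ0, fun i ω => by show μ lam a * π lam i a ω = 0; rw [hμ0, zero_mul]⟩
  · unfold BPMA.BLPobj BPMA.randUtilB
    refine Finset.sum_congr rfl fun lam _ => ?_
    congr 1
    refine Finset.sum_congr rfl fun a _ => Finset.sum_congr rfl fun ω _ => ?_
    rw [← Finset.mul_sum]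
    ring


/-- There exists a DSIC Bayesian randomized contract (zero payments, zero-cost actions). -/
lemma exists_dsic (I : BPMA) : ∃ μ π, I.RandDSIC μ π := by
  classical
  choose a0 ha0 using I.c_zero
  refine ⟨fun lam a => if a = (fun j => a0 j (lam j)) then 1 else 0,
    fun _ _ _ _ => 0, ?_, fun _ _ _ _ => le_refl 0, ?_⟩
  · intro lam
    refine ⟨fun a => by dsimp only; split_ifs <;> norm_num, ?_⟩
    rw [Finset.sum_ite_eq']
    simp
  · intro i lam li'
    set μ0 : I.TProf → I.Profile → ℝ :=
      fun lam a => if a = (fun j => a0 j (lam j)) then 1 else 0 with hμ0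
    set π0 : I.TProf → Fin I.n → I.Profile → I.Out → ℝ := fun _ _ _ _ => 0 with hπ0
    have hU : ∀ (li' : I.Lam i) (ai ai' : I.A i),
        I.Ubay μ0 π0 i lam li' ai ai' =
          -((∑ a : I.Profile, if a i = ai then μ0 (Function.update lam i li') a else 0) *
            I.c i (lam i) ai') := by
      intro li' ai ai'
      rw [ubay_eq]
      simp [hπ0]
    have hMnn : ∀ (li' : I.Lam i) (ai : I.A i),
        0 ≤ ∑ a : I.Profile, if a i = ai then μ0 (Function.update lam i li') a else 0 := by
      intro li' ai
      refine Finset.sum_nonneg fun a _ => ?_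
      simp only [hμ0]
      split_ifs <;> norm_num
    have hRHS : ∑ ai : I.A i, ⨆ ai' : I.A i, I.Ubay μ0 π0 i lam li' ai ai' ≤ 0 := by
      refine Finset.sum_nonpos fun ai _ => ?_
      refine ciSup_le fun ai' => ?_
      rw [hU]
      exact neg_nonpos.2 (mul_nonneg (hMnn li' ai) (I.c_nonneg i (lam i) ai'))
    have hLHS : ∑ ai : I.A i, I.Ubay μ0 π0 i lam (lam i) ai ai = 0 := by
      refine Finset.sum_eq_zero fun ai _ => ?_
      rw [hU]
      by_cases hai : ai = a0 i (lam i)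
      · rw [hai, ha0 i (lam i), mul_zero, neg_zero]
      · have hM : (∑ a : I.Profile,
            if a i = ai then μ0 (Function.update lam i (lam i)) a else 0) = 0 := by
          refine Finset.sum_eq_zero fun a _ => ?_
          simp only [hμ0, Function.update_eq_self]
          split_ifs with h1 h2
          · exact absurd (h1 ▸ congrFun h2 i) hai
          · rfl
          · rfl
        rw [hM, zero_mul, neg_zero]
    rw [hLHS]
    exact hRHS

/-- Any feasible solution of the LP has objective at most 1. -/
lemma blp_le_one (I : BPMA) (μ : I.TProf → I.Profile → ℝ)
    (x : I.TProf → Fin I.n → I.Profile → I.Out → ℝ)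
    (z : ∀ i : Fin I.n, I.TProf → I.Lam i → I.A i → ℝ)
    (h : I.BLPFeasInf I.AdagR μ x z) : I.BLPobj μ x ≤ 1 := by
  obtain ⟨hdist, hx, -, -, -⟩ := h
  unfold BPMA.BLPobj
  have hinner : ∀ lam : I.TProf,
      (∑ a : I.Profile, ∑ ω, I.F lam a ω * (μ lam a * I.r ω - ∑ i, x lam i a ω)) ≤ 1 := by
    intro lam
    calc (∑ a : I.Profile, ∑ ω, I.F lam a ω * (μ lam a * I.r ω - ∑ i, x lam i a ω))
        ≤ ∑ a : I.Profile, ∑ ω, I.F lam a ω * (μ lam a * I.r ω) := by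
          refine Finset.sum_le_sum fun a _ => Finset.sum_le_sum fun ω _ => ?_
          refine mul_le_mul_of_nonneg_left ?_ (I.F_nonneg lam a ω)
          exact sub_le_self _ (Finset.sum_nonneg fun i _ => hx lam i a ω)
      _ ≤ ∑ a : I.Profile, μ lam a := by
          refine Finset.sum_le_sum fun a _ => ?_
          have : (∑ ω, I.F lam a ω * (μ lam a * I.r ω)) =
              μ lam a * ∑ ω, I.F lam a ω * I.r ω := by
            rw [Finset.mul_sum]; exact Finset.sum_congr rfl fun ω _ => by ring
          rw [this]
          calc μ lam a * ∑ ω, I.F lam a ω * I.r ω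
              ≤ μ lam a * ∑ ω, I.F lam a ω := by
                refine mul_le_mul_of_nonneg_left ?_ ((hdist lam).1 a)
                exact Finset.sum_le_sum fun ω _ =>
                  mul_le_of_le_one_right (I.F_nonneg lam a ω) (I.r_le_one ω)
            _ = μ lam a := by rw [I.F_sum_one lam a, mul_one]
      _ = 1 := (hdist lam).2
  calc (∑ lam : I.TProf, I.G lam *
        ∑ a : I.Profile, ∑ ω, I.F lam a ω * (μ lam a * I.r ω - ∑ i, x lam i a ω))
      ≤ ∑ lam : I.TProf, I.G lam * 1 :=
        Finset.sum_le_sum fun lam _ =>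
          mul_le_mul_of_nonneg_left (hinner lam) (I.G_nonneg lam)
    _ = 1 := by simp [I.G_sum_one]

end BPMAaux

/-- The supremum of the objective of `B-LP(∞, 𝒜†_R)` over its feasible
solutions is at least `B-Opt_R`; in particular, every DSIC Bayesian randomized contract
`(μ, π)` yields, with `x^{λ,i}_a(ω) := μ^λ(a)·π^{λ,i}_a(ω)` and
`z^i(λ, λ_i', a_i) := max_{a_i'} U_i^{μ,π}(λ_i→λ_i', a_i→a_i' | λ_{-i})`, a feasible
solution of `B-LP(∞, 𝒜†_R)` with the same objective value. -/
theorem bayesian_lp_relaxation (I : BPMA) :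
    I.BOptR ≤ sSup {v | ∃ μ x z, I.BLPFeasInf I.AdagR μ x z ∧ v = I.BLPobj μ x} ∧
    ∀ (μ : I.TProf → I.Profile → ℝ)
      (π : I.TProf → Fin I.n → I.Profile → I.Out → ℝ),
      I.RandDSIC μ π →
        I.BLPFeasInf I.AdagR μ (fun lam i a ω => μ lam a * π lam i a ω)
          (fun i lam li' ai => ⨆ ai' : I.A i, I.Ubay μ π i lam li' ai ai') ∧
        I.BLPobj μ (fun lam i a ω => μ lam a * π lam i a ω) = I.randUtilB μ π := by
  constructor
  · refine csSup_le_csSup ?_ ?_ ?_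
    · exact ⟨1, fun v hv => by obtain ⟨μ, x, z, hf, hv⟩ := hv; exact hv ▸ BPMAaux.blp_le_one I μ x z hf⟩
    · obtain ⟨μ, π, h⟩ := BPMAaux.exists_dsic I
      exact ⟨I.randUtilB μ π, μ, π, h, rfl⟩
    · rintro u ⟨μ, π, hd, rfl⟩
      obtain ⟨hf, heq⟩ := BPMAaux.feas_of_dsic I μ π hd
      exact ⟨μ, _, _, hf, heq.symm⟩
  · exact fun μ π h => BPMAaux.feas_of_dsic I μ π h
end

section
/- For every α ∈ (0,1) there exists a Bayesian principal-multi-agent instance in which every DSIC deterministic Bayesian contract satisfying limited liability has expected principal utility at most 0 (so B-Opt_D = 0), while the (1/α)-virtual social welfare is strictly positive: V_sw^{1/α} > 0. Consequently the ratio V_sw^{1/α} / B-Opt_D is unbounded. -/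
open scoped Classical BigOperators

namespace GapAux

/-- Number of workers (as a real) in an action profile. -/
noncomputable def W (m : ℕ) (a : Fin m → Bool) : ℝ := ∑ i, if a i then 1 else 0

lemma W_nonneg (m : ℕ) (a : Fin m → Bool) : 0 ≤ W m a :=
  Finset.sum_nonneg fun i _ => by split <;> norm_num

lemma W_le (m : ℕ) (a : Fin m → Bool) : W m a ≤ m := by
  calc W m a ≤ ∑ _i : Fin m, (1:ℝ) :=
        Finset.sum_le_sum fun i _ => by split <;> norm_num
    _ = m := by simp

lemma one_le_W (m : ℕ) (a : Fin m → Bool) (i : Fin m) (h : a i = true) : 1 ≤ W m a := by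
  have := Finset.single_le_sum (f := fun j => if a j then (1:ℝ) else 0)
    (fun j _ => by split <;> norm_num) (Finset.mem_univ i)
  simpa [W, h] using this

lemma W_update_false (m : ℕ) (a : Fin m → Bool) (i : Fin m) (h : a i = true) :
    W m (Function.update a i false) = W m a - 1 := by
  have hpt : (fun j => if Function.update a i false j then (1:ℝ) else 0)
      = Function.update (fun j => if a j then (1:ℝ) else 0) i 0 := by
    funext j
    rcases eq_or_ne j i with rfl | hj
    · simp
    · simp [Function.update_of_ne hj]
  have h1 : W m (Function.update a i false)
      = ∑ j, Function.update (fun j => if a j then (1:ℝ) else 0) i 0 j := by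
    rw [W, hpt]
  rw [h1, Finset.sum_update_of_mem (Finset.mem_univ i)]
  have h2 : W m a = (if a i then (1:ℝ) else 0) +
      ∑ j ∈ Finset.univ.erase i, (if a j then (1:ℝ) else 0) :=
    (Finset.add_sum_erase _ _ (Finset.mem_univ i)).symm
  rw [h2, h]
  rw [show Finset.univ \ {i} = Finset.univ.erase i from by
    rw [Finset.sdiff_singleton_eq_erase]]
  simp

lemma W_all_true (m : ℕ) : W m (fun _ => true) = m := by simp [W]

/-- Success probability with action profile `a`. -/
noncomputable def Q (m : ℕ) (a : Fin m → Bool) : ℝ :=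
  W m a * (W m a + 1) / ((m : ℝ) * ((m : ℝ) + 1))

lemma D_pos (m : ℕ) (hm : 0 < m) : 0 < (m : ℝ) * ((m : ℝ) + 1) := by
  have : (1:ℝ) ≤ m := by exact_mod_cast hm
  nlinarith

lemma Q_nonneg (m : ℕ) (a : Fin m → Bool) : 0 ≤ Q m a := by
  have h1 := W_nonneg m a
  have h2 : (0:ℝ) ≤ (m : ℝ) * ((m : ℝ) + 1) := by positivity
  exact div_nonneg (by nlinarith) h2

lemma Q_le_one (m : ℕ) (hm : 0 < m) (a : Fin m → Bool) : Q m a ≤ 1 := by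
  have h1 := W_nonneg m a
  have h2 := W_le m a
  have hD := D_pos m hm
  rw [Q, div_le_one hD]
  nlinarith

/-- The gap instance: `m` agents, single type, binary effort, Boolean outcome. -/
noncomputable def gapI (m : ℕ) (hm : 0 < m) : BPMA where
  n := m
  npos := hm
  Out := Bool
  fOut := inferInstance
  r := fun ω => if ω then 1 else 0
  r_nonneg := fun ω => by split <;> norm_num
  r_le_one := fun ω => by split <;> norm_num
  A := fun _ => Bool
  fA := fun _ => inferInstance
  neA := fun _ => inferInstance
  Lam := fun _ => Unit
  fLam := fun _ => inferInstance
  neLam := fun _ => inferInstance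
  G := fun _ => 1
  G_nonneg := fun _ => zero_le_one
  G_sum_one := by simp
  c := fun _ _ b => if b then 2 / ((m : ℝ) * ((m : ℝ) + 1)) else 0
  c_nonneg := fun i li a => by
    split
    · positivity
    · exact le_rfl
  c_le_one := fun i li a => by
    split
    · have hD := D_pos m hm
      rw [div_le_one hD]
      have : (1:ℝ) ≤ m := by exact_mod_cast hm
      nlinarith
    · norm_num
  c_zero := fun i li => ⟨false, by norm_num⟩
  F := fun _ a ω => if ω then Q m a else 1 - Q m a
  F_nonneg := fun lam a ω => by
    split
    · exact Q_nonneg m a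
    · linarith [Q_le_one m hm a]
  F_sum_one := fun lam a => by rw [Fintype.sum_bool]; simp

/-- Convert a profile of the gap instance to a Boolean vector (identity up to defeq). -/
def toBool (m : ℕ) (hm : 0 < m) (a : ∀ i : Fin m, (gapI m hm).A i) : Fin m → Bool :=
  fun i => a i

/-- Objective of the virtual-welfare maximization. -/
noncomputable def fObj (m : ℕ) (β : ℝ) (a : Fin m → Bool) : ℝ :=
  Q m a - β * ∑ i, (if a i then 2 / ((m:ℝ) * ((m:ℝ) + 1)) else 0)

lemma fObj_true (m : ℕ) (hm : 0 < m) (β : ℝ) :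
    fObj m β (fun _ => true) = 1 - β * (2 / ((m:ℝ) + 1)) := by
  have hD := D_pos m hm
  have hm0 : ((m:ℝ)) ≠ 0 := by
    have : (0:ℝ) < m := by exact_mod_cast hm
    exact this.ne'
  have h1 : Q m (fun _ => true) = 1 := by
    rw [Q, W_all_true]
    field_simp
  rw [fObj, h1, Finset.sum_congr rfl (fun i _ => if_pos rfl), Finset.sum_const,
    Finset.card_univ, Fintype.card_fin, nsmul_eq_mul]
  have h2 : (m:ℝ) * (2 / ((m:ℝ) * ((m:ℝ) + 1))) = 2 / ((m:ℝ) + 1) := by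
    field_simp
  rw [h2]

end GapAux

/-- For every `α ∈ (0,1)` there exists a Bayesian instance in which every
DSIC deterministic contract satisfying limited liability has expected principal utility at
most `0` (so `B-Opt_D = 0`), while the `(1/α)`-virtual social welfare is strictly positive.
Consequently the ratio `V_sw^{1/α} / B-Opt_D` is unbounded. -/
theorem bayesian_virtual_welfare_gap (α : ℝ) (hα0 : 0 < α) (hα1 : α < 1) :
    ∃ I : BPMA,
      (∀ (act : I.TProf → I.Profile) (p : I.TProf → Fin I.n → I.Out → ℝ),
        I.DetDSIC act p → I.LL p → I.detUtilB act p ≤ 0) ∧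
      I.BOptD = 0 ∧
      0 < I.VswB (1 / α) := by
  classical
  have h2α : (0:ℝ) < 2 / α := by positivity
  set m : ℕ := ⌈2 / α⌉₊ with hmdef
  have hm : 0 < m := Nat.ceil_pos.mpr h2α
  have hmle : 2 / α ≤ (m : ℝ) := Nat.le_ceil _
  have hD := GapAux.D_pos m hm
  -- the key bound: every DSIC LL contract has nonpositive utility
  have key : ∀ (act : (GapAux.gapI m hm).TProf → (GapAux.gapI m hm).Profile)
      (p : (GapAux.gapI m hm).TProf → Fin (GapAux.gapI m hm).n → (GapAux.gapI m hm).Out → ℝ),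
      (GapAux.gapI m hm).DetDSIC act p → (GapAux.gapI m hm).LL p →
      (GapAux.gapI m hm).detUtilB act p ≤ 0 := by
    intro act p hDSIC hLL
    unfold BPMA.detUtilB
    refine Finset.sum_nonpos fun lam _ => ?_
    have hPf : (0:ℝ) ≤ ∑ i, p lam i false :=
      Finset.sum_nonneg fun i _ => hLL lam i false
    have e : (GapAux.gapI m hm).G lam *
        ∑ ω, (GapAux.gapI m hm).F lam (act lam) ω *
          ((GapAux.gapI m hm).r ω - ∑ i, p lam i ω)
        = GapAux.Q m (act lam) * (1 - ∑ i, p lam i true) +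
          (1 - GapAux.Q m (act lam)) * (0 - ∑ i, p lam i false) := by
      show (1:ℝ) * ∑ ω : Bool,
          (if ω then GapAux.Q m (act lam) else 1 - GapAux.Q m (act lam)) *
            ((if ω then (1:ℝ) else 0) - ∑ i, p lam i ω) = _
      rw [Fintype.sum_bool]
      norm_num
    rw [e]
    by_cases hex : ∃ i : Fin m, GapAux.toBool m hm (act lam) i = true
    · obtain ⟨i0, hi0⟩ := hex
      have hw1 : 1 ≤ GapAux.W m (act lam) := GapAux.one_le_W m (act lam) i0 hi0
      have hw0 : (0:ℝ) < GapAux.W m (act lam) := by linarith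
      -- each working agent must be paid at least 1/W on the good outcome
      have hub : ∀ i, act lam i = true → 1 / GapAux.W m (act lam) ≤ p lam i true := by
        intro i hi
        have hd := hDSIC i lam (lam i) false
        rw [Function.update_eq_self i lam] at hd
        have hsum1 : ∑ ω, (GapAux.gapI m hm).F lam (act lam) ω * p lam i ω
            = GapAux.Q m (act lam) * p lam i true +
              (1 - GapAux.Q m (act lam)) * p lam i false := by
          show ∑ ω : Bool,
              (if ω then GapAux.Q m (act lam) else 1 - GapAux.Q m (act lam)) * p lam i ω = _
          rw [Fintype.sum_bool]
          norm_num
        have hsum2 : ∑ ω, (GapAux.gapI m hm).F lam (Function.update (act lam) i false) ω * p lam i ω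
            = GapAux.Q m (Function.update (act lam) i false) * p lam i true +
              (1 - GapAux.Q m (Function.update (act lam) i false)) * p lam i false := by
          show ∑ ω : Bool,
              (if ω then GapAux.Q m (Function.update (act lam) i false)
                else 1 - GapAux.Q m (Function.update (act lam) i false)) * p lam i ω = _
          rw [Fintype.sum_bool]
          norm_num
        have hc1 : (GapAux.gapI m hm).c i (lam i) (act lam i) = 2 / ((m:ℝ) * ((m:ℝ) + 1)) := by
          rw [hi]
          show (if (true : Bool) then 2 / ((m:ℝ) * ((m:ℝ) + 1)) else 0) = _
          norm_num
        have hc2 : (GapAux.gapI m hm).c i (lam i) false = 0 := by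
          show (if (false : Bool) then 2 / ((m:ℝ) * ((m:ℝ) + 1)) else 0) = 0
          norm_num
        rw [hsum1, hsum2, hc1, hc2] at hd
        have hd' := hd
        have hQ : GapAux.Q m (act lam)
            = GapAux.W m (act lam) * (GapAux.W m (act lam) + 1) / ((m:ℝ) * ((m:ℝ) + 1)) := rfl
        have hQ' : GapAux.Q m (Function.update (act lam) i false)
            = (GapAux.W m (act lam) - 1) * GapAux.W m (act lam) / ((m:ℝ) * ((m:ℝ) + 1)) := by
          rw [GapAux.Q, GapAux.W_update_false m (act lam) i hi]
          ring_nf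
        have hpf : (0:ℝ) ≤ p lam i false := hLL lam i false
        have h3 : 2 / ((m:ℝ) * ((m:ℝ) + 1)) * (GapAux.W m (act lam) * (p lam i true - p lam i false))
            = (GapAux.Q m (act lam) - GapAux.Q m (Function.update (act lam) i false)) *
              (p lam i true - p lam i false) := by
          rw [hQ, hQ']
          field_simp
          ring
        have h4 : 2 / ((m:ℝ) * ((m:ℝ) + 1)) * 1 ≤
            2 / ((m:ℝ) * ((m:ℝ) + 1)) * (GapAux.W m (act lam) * (p lam i true - p lam i false)) := by
          rw [h3]
          nlinarith [hd']
        have h5 : 1 ≤ GapAux.W m (act lam) * (p lam i true - p lam i false) :=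
          le_of_mul_le_mul_left h4 (by positivity)
        rw [div_le_iff₀ hw0]
        nlinarith [h5, hpf, hw0]
      have hPt : 1 ≤ ∑ i, p lam i true := by
        set a' : Fin m → Bool := fun j => act lam j with ha'
        have hwa : GapAux.W m a' = GapAux.W m (act lam) := rfl
        have h5 : ∑ i : Fin (GapAux.gapI m hm).n, (if a' i then 1 / GapAux.W m a' else 0) ≤
            ∑ i, p lam i true := by
          refine Finset.sum_le_sum fun i _ => ?_
          by_cases hia : a' i = true
          · rw [if_pos hia]
            rw [hwa]
            exact hub i hia
          · rw [if_neg hia]; exact hLL lam i true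
        have h6 : ∑ i : Fin (GapAux.gapI m hm).n, (if a' i then 1 / GapAux.W m a' else 0)
            = GapAux.W m a' * (1 / GapAux.W m a') := by
          have hsplit : ∀ i : Fin (GapAux.gapI m hm).n, (if a' i then 1 / GapAux.W m a' else 0)
              = (if a' i then (1:ℝ) else 0) * (1 / GapAux.W m a') := fun i => by split <;> ring
          simp only [hsplit]
          rw [← Finset.sum_mul]
          rfl
        have h7 : GapAux.W m a' * (1 / GapAux.W m a') = 1 := by
          rw [hwa]
          field_simp
        rw [h6, h7] at h5
        exact h5
      nlinarith [GapAux.Q_nonneg m (act lam), GapAux.Q_le_one m hm (act lam), hPt, hPf]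
    · push_neg at hex
      have hW0 : GapAux.W m (act lam) = 0 :=
        Finset.sum_eq_zero fun i _ => if_neg (hex i)
      have hQ0 : GapAux.Q m (act lam) = 0 := by
        show GapAux.W m (act lam) * (GapAux.W m (act lam) + 1) / ((m:ℝ) * ((m:ℝ) + 1)) = 0
        rw [hW0]
        simp
      rw [hQ0]
      simp only [zero_mul, zero_add, sub_zero, zero_sub]
      nlinarith [hPf]
  refine ⟨GapAux.gapI m hm, key, ?_, ?_⟩
  · -- B-Opt_D = 0
    have mem0 : (0:ℝ) ∈ {u | ∃ act p, (GapAux.gapI m hm).DetDSIC act p ∧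
        (GapAux.gapI m hm).LL p ∧ u = (GapAux.gapI m hm).detUtilB act p} := by
      refine ⟨fun _ _ => false, fun _ _ _ => 0, ?_, fun lam i ω => le_rfl, ?_⟩
      · intro i lam li' ai'
        have hc : (0:ℝ) ≤ (GapAux.gapI m hm).c i (lam i) ai' :=
          (GapAux.gapI m hm).c_nonneg i (lam i) ai'
        have hc0 : (GapAux.gapI m hm).c i (lam i) false = 0 := by
          show (if (false : Bool) then 2 / ((m:ℝ) * ((m:ℝ) + 1)) else 0) = 0
          norm_num
        simp only [mul_zero, Finset.sum_const_zero, zero_sub, hc0, neg_zero, ge_iff_le]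
        linarith
      · unfold BPMA.detUtilB
        refine (Finset.sum_eq_zero fun lam _ => ?_).symm
        have hQ0 : GapAux.Q m (fun _ => false) = 0 := by
          have : GapAux.W m (fun _ => false) = 0 := Finset.sum_eq_zero fun i _ => by simp
          rw [GapAux.Q, this]; simp
        show (1:ℝ) * ∑ ω : Bool,
            (if ω then GapAux.Q m (fun _ => false) else 1 - GapAux.Q m (fun _ => false)) *
              ((if ω then (1:ℝ) else 0) - ∑ _i : Fin m, (0:ℝ)) = 0
        rw [Fintype.sum_bool, hQ0]
        norm_num
    have hub : ∀ u ∈ {u | ∃ act p, (GapAux.gapI m hm).DetDSIC act p ∧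
        (GapAux.gapI m hm).LL p ∧ u = (GapAux.gapI m hm).detUtilB act p}, u ≤ 0 := by
      rintro u ⟨act, p, h1, h2, rfl⟩
      exact key act p h1 h2
    exact IsGreatest.csSup_eq ⟨mem0, hub⟩
  · -- positive virtual welfare
    unfold BPMA.VswB
    have hrw : ∀ lam : (GapAux.gapI m hm).TProf,
        (GapAux.gapI m hm).G lam * (⨆ a : (GapAux.gapI m hm).Profile,
          ((∑ ω, (GapAux.gapI m hm).F lam a ω * (GapAux.gapI m hm).r ω) -
            (1 / α) * ∑ i, (GapAux.gapI m hm).c i (lam i) (a i))) =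
        ⨆ a : Fin m → Bool, GapAux.fObj m (1 / α) a := by
      intro lam
      have h1 : (GapAux.gapI m hm).G lam = 1 := rfl
      rw [h1, one_mul]
      refine iSup_congr fun a => ?_
      show (∑ ω : Bool, (if ω then GapAux.Q m (GapAux.toBool m hm a)
            else 1 - GapAux.Q m (GapAux.toBool m hm a)) * (if ω then (1:ℝ) else 0)) -
          (1 / α) * (∑ i : Fin m, if GapAux.toBool m hm a i then 2 / ((m:ℝ) * ((m:ℝ) + 1)) else 0) =
          GapAux.fObj m (1 / α) (GapAux.toBool m hm a)
      rw [Fintype.sum_bool, GapAux.fObj]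
      norm_num
    simp only [hrw]
    rw [Finset.sum_const]
    haveI : Unique ((GapAux.gapI m hm).TProf) := ⟨⟨fun _ => ()⟩, fun x => funext fun i => rfl⟩
    rw [Finset.card_univ, Fintype.card_unique, one_smul]
    have hbdd : BddAbove (Set.range (GapAux.fObj m (1 / α))) := (Set.finite_range _).bddAbove
    have hle := le_ciSup hbdd (fun _ => true)
    have hpos : 0 < GapAux.fObj m (1 / α) (fun _ => true) := by
      rw [GapAux.fObj_true m hm]
      have hm1 : (1:ℝ) ≤ m := by exact_mod_cast hm
      have h2m : 2 ≤ α * m := by rw [div_le_iff₀ hα0] at hmle; linarith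
      have he : (1 / α) * (2 / ((m:ℝ) + 1)) = 2 / (α * ((m:ℝ) + 1)) := by
        rw [div_mul_div_comm, one_mul]
      rw [he]
      have hlt : 2 / (α * ((m:ℝ) + 1)) < 1 := by
        rw [div_lt_one (by positivity)]
        nlinarith
      linarith
    linarith
end

section
/- Fix a Bayesian principal-multi-agent instance with n agents and δ > 0. Then AffineContract_δ is DSIC and IR (for every choice of the argmax selection λ ↦ a^λ_δ). That is: for all i ∈ N, λ ∈ Λ, λ_i' ∈ Λ_i and a_i' ∈ A_i, ∑_ω F^λ_{a^λ_δ}(ω) p^{λ,i}_δ(ω) − c_i^{λ_i}(a^λ_{δ,i}) ≥ ∑_ω F^λ_{(a_i', a^{(λ_i',λ_{-i})}_{δ,-i})}(ω) p^{(λ_i',λ_{-i}),i}_δ(ω) − c_i^{λ_i}(a_i'), and for all i, λ, ∑_ω F^λ_{a^λ_δ}(ω) p^{λ,i}_δ(ω) ≥ c_i^{λ_i}(a^λ_{δ,i}). -/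
open scoped Classical BigOperators

lemma BPMA.exp_affPay (I : BPMA) (δ : ℝ) (act : I.TProf → I.Profile)
    (lam lam' : I.TProf) (b : I.Profile) (i : Fin I.n) :
    ∑ ω, I.F lam b ω * I.affPay δ act lam' i ω =
      (1 / ((I.n : ℝ) * (1 + δ))) * (∑ ω, I.F lam b ω * I.r ω) -
        ∑ j ∈ Finset.univ.erase i, I.c j (lam' j) (act lam' j) := by
  simp only [BPMA.affPay, mul_sub, Finset.sum_sub_distrib]
  rw [← Finset.sum_mul, I.F_sum_one, one_mul]
  congr 1
  rw [Finset.mul_sum]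
  refine Finset.sum_congr rfl fun ω _ => ?_
  ring

/-- For every `δ > 0` and every selection of the argmax defining
`AffineContract_δ`, the contract `AffineContract_δ` is DSIC and IR. -/
theorem affine_contract_dsic_ir (I : BPMA) (δ : ℝ) (hδ : 0 < δ)
    (act : I.TProf → I.Profile) (hact : I.AffSel δ act) :
    I.DetDSIC act (I.affPay δ act) ∧ I.IR act (I.affPay δ act) := by
  have hD : 0 < (I.n : ℝ) * (1 + δ) := by
    have : (0:ℝ) < I.n := by exact_mod_cast I.npos
    positivity
  constructor
  · intro i lam li' ai'
    set lam' := Function.update lam i li' with hlam'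
    set b := Function.update (act lam') i ai' with hb
    rw [I.exp_affPay δ act lam lam (act lam) i,
        I.exp_affPay δ act lam lam' b i]
    have hsum : (∑ j ∈ Finset.univ.erase i, I.c j (lam j) (act lam j))
        + I.c i (lam i) (act lam i) = ∑ j, I.c j (lam j) (act lam j) := by
      rw [Finset.sum_erase_add _ _ (Finset.mem_univ i)]
    have hsum' : (∑ j ∈ Finset.univ.erase i, I.c j (lam' j) (act lam' j))
        + I.c i (lam i) ai' = ∑ j, I.c j (lam j) (b j) := by
      rw [← Finset.sum_erase_add _ _ (Finset.mem_univ i)]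
      congr 1
      · refine Finset.sum_congr rfl fun j hj => ?_
        have hji : j ≠ i := (Finset.mem_erase.1 hj).1
        rw [hlam', hb, Function.update_of_ne hji, Function.update_of_ne hji]
      · rw [hb, Function.update_self]
    have := hact lam b
    linarith [this, hsum, hsum']
  · intro lam i
    rw [I.exp_affPay δ act lam lam (act lam) i]
    obtain ⟨a0, ha0⟩ := Classical.axiomOfChoice (fun j => I.c_zero j (lam j))
    have h1 := hact lam a0
    have h2 : ∑ j, I.c j (lam j) (a0 j) = 0 := by
      refine Finset.sum_eq_zero fun j _ => ha0 j
    have h3 : 0 ≤ ∑ ω, I.F lam a0 ω * I.r ω :=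
      Finset.sum_nonneg fun ω _ => mul_nonneg (I.F_nonneg _ _ _) (I.r_nonneg _)
    have h4 : 0 ≤ 1 / ((I.n : ℝ) * (1 + δ)) := by positivity
    have hsum : (∑ j ∈ Finset.univ.erase i, I.c j (lam j) (act lam j))
        + I.c i (lam i) (act lam i) = ∑ j, I.c j (lam j) (act lam j) := by
      rw [Finset.sum_erase_add _ _ (Finset.mem_univ i)]
    nlinarith [mul_nonneg h4 h3]
end
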